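/- arXiv:1512.00084 — 8 statements merged into one kernel-verified Lean document; each statement's English description precedes it below -/
import Mathlib

section
/- If p > 1, f ≥ 0 is p-integrable on (0,∞), and F(x) = ∫₀ˣ f(t) dt, then ∫₀^∞ (F(x)/x)^p dx ≤ (p/(p-1))^p ∫₀^∞ f(x)^p dx. -/
open MeasureTheory Set intervalIntegral
open scoped ENNReal NNReal

lemma lint_Ioo_rpow {c x : ℝ} (hc : -1 < c) (hx : 0 < x) :
    ∫⁻ t in Ioo 0 x, ENNReal.ofReal t ^ c = ENNReal.ofReal (x ^ (c+1) / (c+1)) := by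
  have h1 : ∫⁻ t in Ioo 0 x, ENNReal.ofReal t ^ c
      = ∫⁻ t in Ioo 0 x, ENNReal.ofReal (t ^ c) := by
    refine setLIntegral_congr_fun measurableSet_Ioo (fun t ht => ?_)
    exact ENNReal.ofReal_rpow_of_pos ht.1
  have hint : IntegrableOn (fun t : ℝ => t ^ c) (Ioo 0 x) := by
    have := (intervalIntegrable_rpow' (a := 0) (b := x) hc)
    rwa [intervalIntegrable_iff_integrableOn_Ioo_of_le hx.le] at this
  have hnn : 0 ≤ᵐ[volume.restrict (Ioo 0 x)] fun t : ℝ => t ^ c := by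
    filter_upwards [ae_restrict_mem measurableSet_Ioo] with t ht
    exact Real.rpow_nonneg ht.1.le c
  rw [h1, ← ofReal_integral_eq_lintegral_ofReal hint hnn]
  congr 1
  rw [← integral_Ioc_eq_integral_Ioo, ← intervalIntegral.integral_of_le hx.le,
    integral_rpow (Or.inl hc)]
  rw [Real.zero_rpow (by linarith : c + 1 ≠ 0)]
  ring

lemma lint_Ioi_rpow {a t : ℝ} (ha : a < -1) (ht : 0 < t) :
    ∫⁻ x in Ioi t, ENNReal.ofReal x ^ a = ENNReal.ofReal (-t ^ (a+1) / (a+1)) := by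
  have h1 : ∫⁻ x in Ioi t, ENNReal.ofReal x ^ a
      = ∫⁻ x in Ioi t, ENNReal.ofReal (x ^ a) := by
    refine setLIntegral_congr_fun measurableSet_Ioi (fun x hx => ?_)
    exact ENNReal.ofReal_rpow_of_pos (ht.trans hx)
  have hint := integrableOn_Ioi_rpow_of_lt ha ht
  have hnn : 0 ≤ᵐ[volume.restrict (Ioi t)] fun x : ℝ => x ^ a := by
    filter_upwards [ae_restrict_mem measurableSet_Ioi] with x hx
    exact Real.rpow_nonneg (ht.trans hx).le a
  rw [h1, ← ofReal_integral_eq_lintegral_ofReal hint hnn, integral_Ioi_rpow_of_lt ha ht]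

theorem hardy_inequality (p : ℝ) (hp : 1 < p) (f F : ℝ → ℝ)
    (hf_nonneg : ∀ x ∈ Ioi (0:ℝ), 0 ≤ f x)
    (hf_meas : Measurable f)
    (hf_int : IntegrableOn (fun x => f x ^ p) (Ioi 0))
    (hF : ∀ x, F x = ∫ t in (0:ℝ)..x, f t) :
    ∫ x in Ioi (0:ℝ), (F x / x) ^ p ≤ (p / (p - 1)) ^ p * ∫ x in Ioi (0:ℝ), f x ^ p := by
  have hpq : p.HolderConjugate (p / (p - 1)) := Real.HolderConjugate.conjExponent hp
  set q : ℝ := p / (p - 1) with hq_def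
  have hp0 : 0 < p := hpq.pos
  have hq0 : 0 < q := hpq.symm.pos
  have hpne : p ≠ 0 := hp0.ne'
  have hqne : q ≠ 0 := hq0.ne'
  have hp1ne : p - 1 ≠ 0 := by linarith
  have hinv : 1/p + 1/q = 1 := by simpa [one_div] using hpq.inv_add_inv_eq_one
  set r : ℝ := 1 / (p * q) with hr_def
  set a : ℝ := p / q ^ 2 - p with ha_def
  have hrp : r * p = 1 / q := by rw [hr_def]; field_simp
  have hrq : r * q = 1 / p := by rw [hr_def]; field_simp
  have hpq_sub : p / q = p - 1 := hpq.div_conj_eq_sub_one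
  have ha1 : a + 1 = -(1/q) := by
    rw [ha_def, hq_def]; field_simp; ring
  clear_value r a
  have hq_inv_pos : (0:ℝ) < 1/q := by positivity
  have halt : a < -1 := by linarith
  set Φ : ℝ → ℝ≥0∞ := fun t => ENNReal.ofReal (f t) with hΦ_def
  have hΦ_meas : Measurable Φ := hf_meas.ennreal_ofReal
  set Ψ : ℝ → ℝ≥0∞ := fun t => Φ t ^ p * ENNReal.ofReal t ^ (1/q) with hΨ_def
  have hΨ_meas : Measurable Ψ :=
    (hΦ_meas.pow_const p).mul (measurable_id.ennreal_ofReal.pow_const _)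
  set A : ℝ → ℝ≥0∞ := fun x => ∫⁻ t in Ioo 0 x, Ψ t with hA_def
  have hA_mono : Monotone A := fun x y hxy =>
    lintegral_mono' (Measure.restrict_mono (Ioo_subset_Ioo_right hxy) le_rfl) le_rfl
  have hA_meas : Measurable A := hA_mono.measurable
  -- Step 1: Hölder
  have step1 : ∀ x : ℝ, 0 < x →
      (∫⁻ t in Ioo 0 x, Φ t) ^ p ≤ A x * ENNReal.ofReal (q * x ^ (1/q)) ^ (p/q) := by
    intro x hx
    set u : ℝ → ℝ≥0∞ := fun t => Φ t * ENNReal.ofReal t ^ r with hu_def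
    set v : ℝ → ℝ≥0∞ := fun t => ENNReal.ofReal t ^ (-r) with hv_def
    have hcong : ∫⁻ t in Ioo 0 x, Φ t = ∫⁻ t in Ioo 0 x, (u * v) t := by
      refine setLIntegral_congr_fun measurableSet_Ioo (fun t ht => ?_)
      have h0 : ENNReal.ofReal t ≠ 0 := by
        simp only [ne_eq, ENNReal.ofReal_eq_zero, not_le]; exact ht.1
      have hT : ENNReal.ofReal t ≠ ⊤ := ENNReal.ofReal_ne_top
      have h1 : ENNReal.ofReal t ^ r * ENNReal.ofReal t ^ (-r) = 1 := by
        rw [← ENNReal.rpow_add r (-r) h0 hT]; simp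
      simp only [hu_def, hv_def, Pi.mul_apply, mul_assoc, h1, mul_one]
    have hu_meas : AEMeasurable u (volume.restrict (Ioo 0 x)) :=
      (hΦ_meas.mul (measurable_id.ennreal_ofReal.pow_const _)).aemeasurable
    have hv_meas : AEMeasurable v (volume.restrict (Ioo 0 x)) :=
      (measurable_id.ennreal_ofReal.pow_const _).aemeasurable
    have holder := ENNReal.lintegral_mul_le_Lp_mul_Lq (volume.restrict (Ioo 0 x)) hpq
      hu_meas hv_meas
    have hvq : ∫⁻ t in Ioo 0 x, v t ^ q = ENNReal.ofReal (q * x ^ (1/q)) := by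
      have h2 : ∀ t : ℝ, v t ^ q = ENNReal.ofReal t ^ (-(1/p)) := by
        intro t
        rw [hv_def, ← ENNReal.rpow_mul]
        congr 1
        rw [neg_mul, hrq]
      simp only [h2]
      rw [lint_Ioo_rpow (by linarith : (-1:ℝ) < -(1/p)) hx]
      congr 1
      have h3 : -(1/p) + 1 = 1/q := by linarith
      rw [h3]
      field_simp
    have hup : ∀ t : ℝ, u t ^ p = Ψ t := by
      intro t
      rw [hu_def, hΨ_def, ENNReal.mul_rpow_of_nonneg _ _ hp0.le, ← ENNReal.rpow_mul, hrp]
    calc (∫⁻ t in Ioo 0 x, Φ t) ^ p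
        = (∫⁻ t in Ioo 0 x, (u * v) t) ^ p := by rw [hcong]
      _ ≤ ((∫⁻ t in Ioo 0 x, u t ^ p) ^ (1/p) * (∫⁻ t in Ioo 0 x, v t ^ q) ^ (1/q)) ^ p :=
          ENNReal.rpow_le_rpow holder hp0.le
      _ = A x * ENNReal.ofReal (q * x ^ (1/q)) ^ (p/q) := by
          simp only [hup, hvq, hA_def]
          rw [ENNReal.mul_rpow_of_nonneg _ _ hp0.le, ← ENNReal.rpow_mul, ← ENNReal.rpow_mul,
            one_div_mul_cancel hpne, ENNReal.rpow_one, one_div_mul_eq_div]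
  have hXa_meas : Measurable fun x : ℝ => ENNReal.ofReal x ^ a :=
    measurable_id.ennreal_ofReal.pow_const a
  -- Step 2: pointwise bound for the integrand
  have step2 : ∀ x ∈ Ioi (0:ℝ),
      ENNReal.ofReal ((F x / x) ^ p)
        ≤ ENNReal.ofReal q ^ (p/q) * (ENNReal.ofReal x ^ a * A x) := by
    intro x hx
    rw [mem_Ioi] at hx
    have hX0 : ENNReal.ofReal x ≠ 0 := by
      simp only [ne_eq, ENNReal.ofReal_eq_zero, not_le]; exact hx
    have hXT : ENNReal.ofReal x ≠ ⊤ := ENNReal.ofReal_ne_top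
    have hFx : F x = ∫ t in Ioo 0 x, f t := by
      rw [hF x, intervalIntegral.integral_of_le hx.le, integral_Ioc_eq_integral_Ioo]
    have hnnf : 0 ≤ᵐ[volume.restrict (Ioo 0 x)] f := by
      filter_upwards [ae_restrict_mem measurableSet_Ioo] with t ht
      exact hf_nonneg t ht.1
    have hF0 : 0 ≤ F x := by
      rw [hFx]
      exact setIntegral_nonneg measurableSet_Ioo fun t ht => hf_nonneg t ht.1
    have hFle : ENNReal.ofReal (F x) ≤ ∫⁻ t in Ioo 0 x, Φ t := by
      by_cases hfi : IntegrableOn f (Ioo 0 x)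
      · rw [hFx, ofReal_integral_eq_lintegral_ofReal hfi hnnf]
      · rw [hFx, integral_undef hfi]; simp
    have hdiv : ENNReal.ofReal ((F x / x) ^ p)
        = ENNReal.ofReal (F x) ^ p * ENNReal.ofReal x ^ (-p) := by
      rw [Real.div_rpow hF0 hx.le, ENNReal.ofReal_div_of_pos (Real.rpow_pos_of_pos hx p),
        ← ENNReal.ofReal_rpow_of_nonneg hF0 hp0.le, ← ENNReal.ofReal_rpow_of_pos hx,
        div_eq_mul_inv, ← ENNReal.rpow_neg]
    have hkey : ENNReal.ofReal (F x) ^ p * ENNReal.ofReal x ^ (-p)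
        ≤ (A x * ENNReal.ofReal (q * x ^ (1/q)) ^ (p/q)) * ENNReal.ofReal x ^ (-p) :=
      mul_le_mul_left ((ENNReal.rpow_le_rpow hFle hp0.le).trans (step1 x hx)) _
    rw [hdiv]
    refine hkey.trans (le_of_eq ?_)
    have hsplit : ENNReal.ofReal (q * x ^ (1/q))
        = ENNReal.ofReal q * ENNReal.ofReal x ^ (1/q) := by
      rw [ENNReal.ofReal_mul hq0.le, ENNReal.ofReal_rpow_of_pos hx]
    rw [hsplit, ENNReal.mul_rpow_of_nonneg _ _ (by positivity : (0:ℝ) ≤ p/q),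
      ← ENNReal.rpow_mul]
    have hXcomb : ENNReal.ofReal x ^ (1/q * (p/q)) * ENNReal.ofReal x ^ (-p)
        = ENNReal.ofReal x ^ a := by
      rw [← ENNReal.rpow_add _ _ hX0 hXT]
      congr 1
      rw [ha_def]; ring
    calc A x * (ENNReal.ofReal q ^ (p/q) * ENNReal.ofReal x ^ (1/q * (p/q)))
          * ENNReal.ofReal x ^ (-p)
        = ENNReal.ofReal q ^ (p/q)
          * ((ENNReal.ofReal x ^ (1/q * (p/q)) * ENNReal.ofReal x ^ (-p)) * A x) := by ring
      _ = ENNReal.ofReal q ^ (p/q) * (ENNReal.ofReal x ^ a * A x) := by rw [hXcomb]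
  -- Step 3: integrate the pointwise bound
  have hCne : ENNReal.ofReal q ^ (p/q) ≠ ⊤ :=
    ENNReal.rpow_ne_top_of_nonneg (by positivity) ENNReal.ofReal_ne_top
  have step3 : (∫⁻ x in Ioi (0:ℝ), ENNReal.ofReal ((F x / x) ^ p))
      ≤ ENNReal.ofReal q ^ (p/q) * ∫⁻ x in Ioi (0:ℝ), ENNReal.ofReal x ^ a * A x := by
    rw [← lintegral_const_mul' _ _ hCne]
    exact setLIntegral_mono
      (measurable_const.mul (hXa_meas.mul hA_meas))
      step2
  -- Step 4: Tonelli
  have step4 : (∫⁻ x in Ioi (0:ℝ), ENNReal.ofReal x ^ a * A x)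
      = ∫⁻ t in Ioi (0:ℝ), Ψ t * ∫⁻ x in Ioi t, ENNReal.ofReal x ^ a := by
    have h1 : ∀ x ∈ Ioi (0:ℝ), ENNReal.ofReal x ^ a * A x
        = ∫⁻ t in Ioi (0:ℝ),
            (Ioo 0 x).indicator (fun s => ENNReal.ofReal x ^ a * Ψ s) t := by
      intro x _
      rw [lintegral_indicator measurableSet_Ioo, Measure.restrict_restrict measurableSet_Ioo,
        inter_eq_left.mpr Ioo_subset_Ioi_self,
        lintegral_const_mul _ hΨ_meas]
    have h2 : ∀ t ∈ Ioi (0:ℝ),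
        (∫⁻ x in Ioi (0:ℝ), (Ioo 0 x).indicator (fun s => ENNReal.ofReal x ^ a * Ψ s) t)
          = Ψ t * ∫⁻ x in Ioi t, ENNReal.ofReal x ^ a := by
      intro t ht
      rw [mem_Ioi] at ht
      have e1 : ∀ x : ℝ, (Ioo 0 x).indicator (fun s => ENNReal.ofReal x ^ a * Ψ s) t
          = (Ioi t).indicator (fun x => ENNReal.ofReal x ^ a * Ψ t) x := by
        intro x
        by_cases hxt : t < x
        · rw [indicator_of_mem (mem_Ioo.mpr ⟨ht, hxt⟩), indicator_of_mem (mem_Ioi.mpr hxt)]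
        · rw [indicator_of_notMem (fun h => hxt (mem_Ioo.mp h).2),
            indicator_of_notMem (fun h => hxt (mem_Ioi.mp h))]
      simp only [e1]
      rw [lintegral_indicator measurableSet_Ioi, Measure.restrict_restrict measurableSet_Ioi,
        inter_eq_left.mpr (Ioi_subset_Ioi ht.le), lintegral_mul_const _ hXa_meas, mul_comm]
    have hswap : (∫⁻ x in Ioi (0:ℝ), ∫⁻ t in Ioi (0:ℝ),
          (Ioo 0 x).indicator (fun s => ENNReal.ofReal x ^ a * Ψ s) t)
        = ∫⁻ t in Ioi (0:ℝ), ∫⁻ x in Ioi (0:ℝ),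
          (Ioo 0 x).indicator (fun s => ENNReal.ofReal x ^ a * Ψ s) t := by
      apply lintegral_lintegral_swap
      have : (Function.uncurry fun x t =>
          (Ioo 0 x).indicator (fun s => ENNReal.ofReal x ^ a * Ψ s) t)
          = {z : ℝ × ℝ | 0 < z.2 ∧ z.2 < z.1}.indicator
              (fun z => ENNReal.ofReal z.1 ^ a * Ψ z.2) := by
        funext z
        rcases z with ⟨x, t⟩
        simp only [Function.uncurry, indicator_apply, mem_Ioo, mem_setOf_eq]
      rw [this]
      exact (Measurable.indicator
        (((measurable_fst.ennreal_ofReal.pow_const a)).mul (hΨ_meas.comp measurable_snd))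
        ((measurableSet_lt measurable_const measurable_snd).inter
          (measurableSet_lt measurable_snd measurable_fst))).aemeasurable
    rw [setLIntegral_congr_fun measurableSet_Ioi h1, hswap,
      setLIntegral_congr_fun measurableSet_Ioi h2]
  -- Step 5: compute the inner integral
  have step5 : ∀ t ∈ Ioi (0:ℝ),
      Ψ t * (∫⁻ x in Ioi t, ENNReal.ofReal x ^ a) = ENNReal.ofReal q * Φ t ^ p := by
    intro t ht
    rw [mem_Ioi] at ht
    have hT0 : ENNReal.ofReal t ≠ 0 := by
      simp only [ne_eq, ENNReal.ofReal_eq_zero, not_le]; exact ht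
    have hTT : ENNReal.ofReal t ≠ ⊤ := ENNReal.ofReal_ne_top
    rw [lint_Ioi_rpow halt ht]
    have hval : -t ^ (a+1) / (a+1) = q * t ^ (-(1/q)) := by
      rw [ha1, neg_div_neg_eq]; field_simp
    rw [hval, ENNReal.ofReal_mul hq0.le, ← ENNReal.ofReal_rpow_of_pos ht]
    have hcomb : ENNReal.ofReal t ^ (1/q) * ENNReal.ofReal t ^ (-(1/q)) = 1 := by
      rw [← ENNReal.rpow_add _ _ hT0 hTT]; simp
    calc Ψ t * (ENNReal.ofReal q * ENNReal.ofReal t ^ (-(1/q)))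
        = ENNReal.ofReal q * (Φ t ^ p
            * (ENNReal.ofReal t ^ (1/q) * ENNReal.ofReal t ^ (-(1/q)))) := by
          rw [hΨ_def]; ring
      _ = ENNReal.ofReal q * Φ t ^ p := by rw [hcomb, mul_one]
  -- Step 6: the lintegral of Φ^p equals the Bochner integral of f^p
  have hIpos : 0 ≤ ∫ x in Ioi (0:ℝ), f x ^ p :=
    setIntegral_nonneg measurableSet_Ioi fun x hx => Real.rpow_nonneg (hf_nonneg x hx) p
  have step6 : (∫⁻ t in Ioi (0:ℝ), Φ t ^ p)
      = ENNReal.ofReal (∫ x in Ioi (0:ℝ), f x ^ p) := by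
    have hnn : 0 ≤ᵐ[volume.restrict (Ioi (0:ℝ))] fun x => f x ^ p := by
      filter_upwards [ae_restrict_mem measurableSet_Ioi] with x hx
      exact Real.rpow_nonneg (hf_nonneg x hx) p
    rw [ofReal_integral_eq_lintegral_ofReal hf_int hnn]
    refine setLIntegral_congr_fun measurableSet_Ioi (fun t ht => ?_)
    rw [hΦ_def]
    exact ENNReal.ofReal_rpow_of_nonneg (hf_nonneg t ht) hp0.le
  -- Assemble the lintegral estimate
  have hconst : ENNReal.ofReal q ^ (p/q) * ENNReal.ofReal q = ENNReal.ofReal (q ^ p) := by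
    have hQ0 : ENNReal.ofReal q ≠ 0 := by
      simp only [ne_eq, ENNReal.ofReal_eq_zero, not_le]; exact hq0
    have h1 : p/q + 1 = p := by rw [hpq_sub]; ring
    calc ENNReal.ofReal q ^ (p/q) * ENNReal.ofReal q
        = ENNReal.ofReal q ^ (p/q) * ENNReal.ofReal q ^ (1:ℝ) := by rw [ENNReal.rpow_one]
      _ = ENNReal.ofReal q ^ (p/q + 1) :=
          (ENNReal.rpow_add _ _ hQ0 ENNReal.ofReal_ne_top).symm
      _ = ENNReal.ofReal q ^ p := by rw [h1]
      _ = ENNReal.ofReal (q ^ p) := ENNReal.ofReal_rpow_of_pos hq0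
  have main : (∫⁻ x in Ioi (0:ℝ), ENNReal.ofReal ((F x / x) ^ p))
      ≤ ENNReal.ofReal ((p/(p-1)) ^ p * ∫ x in Ioi (0:ℝ), f x ^ p) := by
    calc (∫⁻ x in Ioi (0:ℝ), ENNReal.ofReal ((F x / x) ^ p))
        ≤ ENNReal.ofReal q ^ (p/q) * ∫⁻ x in Ioi (0:ℝ), ENNReal.ofReal x ^ a * A x := step3
      _ = ENNReal.ofReal q ^ (p/q)
            * ∫⁻ t in Ioi (0:ℝ), Ψ t * ∫⁻ x in Ioi t, ENNReal.ofReal x ^ a := by rw [step4]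
      _ = ENNReal.ofReal q ^ (p/q) * ∫⁻ t in Ioi (0:ℝ), ENNReal.ofReal q * Φ t ^ p := by
            rw [setLIntegral_congr_fun measurableSet_Ioi step5]
      _ = ENNReal.ofReal q ^ (p/q) * (ENNReal.ofReal q * ∫⁻ t in Ioi (0:ℝ), Φ t ^ p) := by
            rw [lintegral_const_mul' _ _ ENNReal.ofReal_ne_top]
      _ = ENNReal.ofReal (q ^ p) * ENNReal.ofReal (∫ x in Ioi (0:ℝ), f x ^ p) := by
            rw [step6, ← mul_assoc, hconst]
      _ = ENNReal.ofReal ((p/(p-1)) ^ p * ∫ x in Ioi (0:ℝ), f x ^ p) := by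
            rw [← ENNReal.ofReal_mul (by positivity), hq_def]
  -- Convert back to Bochner integrals
  have hRHS0 : 0 ≤ (p/(p-1)) ^ p * ∫ x in Ioi (0:ℝ), f x ^ p := by
    have : (0:ℝ) ≤ (p/(p-1)) ^ p := Real.rpow_nonneg (by positivity) p
    exact mul_nonneg this hIpos
  by_cases hLi : IntegrableOn (fun x => (F x / x) ^ p) (Ioi 0)
  · have h0 : 0 ≤ᵐ[volume.restrict (Ioi (0:ℝ))] fun x => (F x / x) ^ p := by
      filter_upwards [ae_restrict_mem measurableSet_Ioi] with x hx
      have hF0 : 0 ≤ F x := by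
        rw [hF x, intervalIntegral.integral_of_le (le_of_lt hx), integral_Ioc_eq_integral_Ioo]
        exact setIntegral_nonneg measurableSet_Ioo fun t ht => hf_nonneg t ht.1
      exact Real.rpow_nonneg (div_nonneg hF0 (le_of_lt hx)) p
    rw [integral_eq_lintegral_of_nonneg_ae h0 hLi.aestronglyMeasurable]
    exact ENNReal.toReal_le_of_le_ofReal hRHS0 main
  · rw [integral_undef hLi]
    exact hRHS0
end

section
/- Let f, g > 0 be non-decreasing on (0,∞), F(x)=∫₀ˣ f, G(x)=∫₀ˣ g. Let φ, ψ be non-decreasing, submultiplicative and convex nonnegative functions. If x ↦ φ(f(x))ψ(g(x)) x^{1-p} is integrable on (0,∞), then for p > 1: ∫₀^∞ φ(F(x))ψ(G(x)) x^{1-p} / (φ(x)ψ(x)) dx ≤ (1/(p-1)) ∫₀^∞ φ(f(x))ψ(g(x)) x^{1-p} dx. -/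
open MeasureTheory Set intervalIntegral

open Filter
open scoped ENNReal NNReal

lemma aux_int {u : ℝ → ℝ} {x : ℝ} (hx : 0 < x) (hm : MonotoneOn u (Ioc 0 x))
    (h0 : ∀ t ∈ Ioc 0 x, 0 ≤ u t) : IntegrableOn u (Ioc 0 x) := by
  have hmeas := aemeasurable_restrict_of_monotoneOn (μ := volume) measurableSet_Ioc hm
  refine Integrable.mono' (g := fun _ => u x)
    (integrableOn_const measure_Ioc_lt_top.ne) hmeas.aestronglyMeasurable ?_
  filter_upwards [ae_restrict_mem measurableSet_Ioc] with t ht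
  rw [Real.norm_eq_abs, abs_of_nonneg (h0 t ht)]
  exact hm ht ⟨hx, le_refl x⟩ ht.2

lemma aux_cont {φ : ℝ → ℝ} (hmono : Monotone φ) (hconv : ConvexOn ℝ (Ici 0) φ) :
    ContinuousOn φ (Ici 0) := by
  intro a ha
  rcases eq_or_lt_of_le (mem_Ici.mp ha) with h0 | h0
  · -- continuity within Ici 0 at 0
    subst h0
    rw [ContinuousWithinAt]
    refine tendsto_of_tendsto_of_tendsto_of_le_of_le' (g := fun _ => φ 0)
      (h := fun y => (1 - y) * φ 0 + y * φ 1) tendsto_const_nhds ?_ ?_ ?_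
    · have : Tendsto (fun y : ℝ => (1 - y) * φ 0 + y * φ 1) (nhds 0) (nhds ((1-0) * φ 0 + 0 * φ 1)) := by
        exact (((continuous_const.sub continuous_id).mul continuous_const).add
          ((continuous_id).mul continuous_const)).tendsto 0
      simpa using this.mono_left nhdsWithin_le_nhds
    · exact eventually_of_mem self_mem_nhdsWithin fun y hy => hmono hy
    · have hIcc : Icc (0:ℝ) 1 ∈ nhdsWithin 0 (Ici 0) := by
        have h1 := inter_mem_nhdsWithin (Ici (0:ℝ)) (Iio_mem_nhds (by norm_num : (0:ℝ) < 1))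
        exact Filter.mem_of_superset h1 fun y hy => ⟨hy.1, le_of_lt hy.2⟩
      refine eventually_of_mem hIcc fun y hy => ?_
      have := hconv.2 (self_mem_Ici) (by norm_num : (1:ℝ) ∈ Ici 0)
        (by linarith [hy.2] : (0:ℝ) ≤ 1 - y) hy.1 (by ring)
      simpa [smul_eq_mul, mul_comm] using this
  · have h := hconv.continuousOn_interior
    rw [interior_Ici] at h
    exact (h.continuousAt (Ioi_mem_nhds h0)).continuousWithinAt

lemma aux_cheby {x : ℝ} (hx : 0 < x) {u v : ℝ → ℝ}
    (hum : MonotoneOn u (Ioc 0 x)) (hvm : MonotoneOn v (Ioc 0 x))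
    (hu : IntegrableOn u (Ioc 0 x)) (hv : IntegrableOn v (Ioc 0 x))
    (huv : IntegrableOn (fun t => u t * v t) (Ioc 0 x)) :
    (∫ t in Ioc (0:ℝ) x, u t) * (∫ t in Ioc (0:ℝ) x, v t)
      ≤ x * ∫ t in Ioc (0:ℝ) x, u t * v t := by
  set μ := volume.restrict (Ioc (0:ℝ) x) with hμ
  haveI : IsFiniteMeasure μ :=
    ⟨by rw [hμ, Measure.restrict_apply_univ]; exact measure_Ioc_lt_top⟩
  have h1 : ∫ _t, (1:ℝ) ∂μ = x := by
    rw [MeasureTheory.integral_const, smul_eq_mul, mul_one, hμ, measureReal_def, Measure.restrict_apply_univ,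
      Real.volume_Ioc, ENNReal.toReal_ofReal (by linarith), sub_zero]
  have I1 : Integrable (fun z : ℝ × ℝ => (u z.1 * v z.1) * (1:ℝ)) (μ.prod μ) :=
    Integrable.mul_prod huv (integrable_const 1)
  have I2 : Integrable (fun z : ℝ × ℝ => (1:ℝ) * (u z.2 * v z.2)) (μ.prod μ) :=
    Integrable.mul_prod (integrable_const 1) huv
  have I3 : Integrable (fun z : ℝ × ℝ => u z.1 * v z.2) (μ.prod μ) :=
    Integrable.mul_prod hu hv
  have I4 : Integrable (fun z : ℝ × ℝ => v z.1 * u z.2) (μ.prod μ) :=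
    Integrable.mul_prod hv hu
  have I12 : Integrable (fun z : ℝ × ℝ => (u z.1 * v z.1) * (1:ℝ) + (1:ℝ) * (u z.2 * v z.2))
      (μ.prod μ) := I1.add I2
  have I34 : Integrable (fun z : ℝ × ℝ => u z.1 * v z.2 + v z.1 * u z.2) (μ.prod μ) := I3.add I4
  have key : 0 ≤ ∫ z, (u z.1 - u z.2) * (v z.1 - v z.2) ∂(μ.prod μ) := by
    refine integral_nonneg_of_ae ?_
    have hmem : ∀ᵐ z ∂(μ.prod μ), z ∈ (Ioc (0:ℝ) x) ×ˢ (Ioc (0:ℝ) x) := by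
      rw [hμ, Measure.prod_restrict]
      exact ae_restrict_mem (measurableSet_Ioc.prod measurableSet_Ioc)
    filter_upwards [hmem] with z hz
    show (0:ℝ) ≤ (u z.1 - u z.2) * (v z.1 - v z.2)
    rcases le_total z.2 z.1 with h | h
    · exact mul_nonneg (sub_nonneg.2 (hum hz.2 hz.1 h)) (sub_nonneg.2 (hvm hz.2 hz.1 h))
    · nlinarith [sub_nonpos.2 (hum hz.1 hz.2 h), sub_nonpos.2 (hvm hz.1 hz.2 h)]
  have S0 : ∫ z, (u z.1 - u z.2) * (v z.1 - v z.2) ∂(μ.prod μ)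
      = ∫ z, ((u z.1 * v z.1) * (1:ℝ) + (1:ℝ) * (u z.2 * v z.2))
          - (u z.1 * v z.2 + v z.1 * u z.2) ∂(μ.prod μ) :=
    integral_congr_ae (Filter.Eventually.of_forall fun z => by ring)
  have S1 : ∫ z, ((u z.1 * v z.1) * (1:ℝ) + (1:ℝ) * (u z.2 * v z.2))
          - (u z.1 * v z.2 + v z.1 * u z.2) ∂(μ.prod μ)
      = (∫ z, ((u z.1 * v z.1) * (1:ℝ) + (1:ℝ) * (u z.2 * v z.2)) ∂(μ.prod μ))
        - ∫ z, (u z.1 * v z.2 + v z.1 * u z.2) ∂(μ.prod μ) := integral_sub I12 I34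
  have S2 : ∫ z, ((u z.1 * v z.1) * (1:ℝ) + (1:ℝ) * (u z.2 * v z.2)) ∂(μ.prod μ)
      = (∫ z : ℝ × ℝ, (u z.1 * v z.1) * (1:ℝ) ∂(μ.prod μ))
        + ∫ z : ℝ × ℝ, (1:ℝ) * (u z.2 * v z.2) ∂(μ.prod μ) := integral_add I1 I2
  have S3 : ∫ z, (u z.1 * v z.2 + v z.1 * u z.2) ∂(μ.prod μ)
      = (∫ z : ℝ × ℝ, u z.1 * v z.2 ∂(μ.prod μ))
        + ∫ z : ℝ × ℝ, v z.1 * u z.2 ∂(μ.prod μ) := integral_add I3 I4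
  have E1 : ∫ z : ℝ × ℝ, (u z.1 * v z.1) * (1:ℝ) ∂(μ.prod μ)
      = (∫ t, u t * v t ∂μ) * ∫ _t, (1:ℝ) ∂μ :=
    integral_prod_mul (fun t => u t * v t) (fun _ => (1:ℝ))
  have E2 : ∫ z : ℝ × ℝ, (1:ℝ) * (u z.2 * v z.2) ∂(μ.prod μ)
      = (∫ _t, (1:ℝ) ∂μ) * ∫ t, u t * v t ∂μ :=
    integral_prod_mul (fun _ => (1:ℝ)) (fun t => u t * v t)
  have E3 : ∫ z : ℝ × ℝ, u z.1 * v z.2 ∂(μ.prod μ)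
      = (∫ t, u t ∂μ) * ∫ t, v t ∂μ := integral_prod_mul u v
  have E4 : ∫ z : ℝ × ℝ, v z.1 * u z.2 ∂(μ.prod μ)
      = (∫ t, v t ∂μ) * ∫ t, u t ∂μ := integral_prod_mul v u
  rw [S0, S1, S2, S3, E1, E2, E3, E4, h1] at key
  nlinarith [key]

lemma aux_hardy {h : ℝ → ℝ} {p : ℝ} (hp : 1 < p)
    (hm : MonotoneOn h (Ioi 0)) (h0 : ∀ t ∈ Ioi (0:ℝ), 0 ≤ h t)
    (hint : IntegrableOn (fun t => h t * t ^ (1 - p)) (Ioi 0)) :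
    IntegrableOn (fun x => (∫ t in Ioc (0:ℝ) x, h t) * x ^ (-p)) (Ioi 0) ∧
    ∫ x in Ioi (0:ℝ), (∫ t in Ioc (0:ℝ) x, h t) * x ^ (-p)
      = (1 / (p - 1)) * ∫ t in Ioi (0:ℝ), h t * t ^ (1 - p) := by
  set μ0 := volume.restrict (Ioi (0:ℝ)) with hμ0
  have hpm : -p < -1 := by linarith
  have hInt : ∀ x : ℝ, 0 < x → IntegrableOn h (Ioc 0 x) := fun x hx =>
    aux_int hx (hm.mono Ioc_subset_Ioi_self) (fun t ht => h0 t ht.1)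
  set K : ℝ → ℝ := fun x => ∫ t in Ioc (0:ℝ) x, h t with hKdef
  set C : ℝ → ℝ := fun x => K x * x ^ (-p) with hCdef
  have hK0 : ∀ x : ℝ, 0 ≤ K x := fun x =>
    setIntegral_nonneg measurableSet_Ioc (fun t ht => h0 t ht.1)
  have hC0 : ∀ x ∈ Ioi (0:ℝ), 0 ≤ C x := fun x hx =>
    mul_nonneg (hK0 x) (Real.rpow_nonneg (le_of_lt hx) _)
  have hCnn : 0 ≤ᵐ[μ0] C := (ae_restrict_mem measurableSet_Ioi).mono hC0
  have hnn : 0 ≤ᵐ[μ0] fun t => h t * t ^ (1 - p) :=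
    (ae_restrict_mem measurableSet_Ioi).mono fun t ht =>
      mul_nonneg (h0 t ht) (Real.rpow_nonneg (le_of_lt ht) _)
  -- the product kernel
  set Fz : ℝ × ℝ → ℝ≥0∞ := fun z => {w : ℝ × ℝ | w.2 ≤ w.1}.indicator
    (fun w => ENNReal.ofReal (w.1 ^ (-p)) * ENNReal.ofReal (h w.2)) z with hFzdef
  have hS : MeasurableSet {w : ℝ × ℝ | w.2 ≤ w.1} :=
    measurableSet_le measurable_snd measurable_fst
  have hmeas_h : AEMeasurable h μ0 := aemeasurable_restrict_of_monotoneOn measurableSet_Ioi hm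
  have hFzm : AEMeasurable Fz (μ0.prod μ0) := by
    refine AEMeasurable.indicator ?_ hS
    have h1 : Measurable fun w : ℝ × ℝ => ENNReal.ofReal (w.1 ^ (-p)) := by fun_prop
    have h2 : AEMeasurable (fun w : ℝ × ℝ => ENNReal.ofReal (h w.2)) (μ0.prod μ0) :=
      (ENNReal.measurable_ofReal.comp_aemeasurable hmeas_h).comp_quasiMeasurePreserving
        Measure.quasiMeasurePreserving_snd
    exact h1.aemeasurable.mul h2
  -- step A: pointwise on x
  have hA : ∀ x ∈ Ioi (0:ℝ),
      ENNReal.ofReal (C x) = ∫⁻ t, Fz (x, t) ∂μ0 := by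
    intro x hx
    have e1 : ∀ t : ℝ, Fz (x, t)
        = (Iic x).indicator (fun t => ENNReal.ofReal (x ^ (-p)) * ENNReal.ofReal (h t)) t := by
      intro t; by_cases ht : t ≤ x <;> simp [hFzdef, indicator, ht]
    calc ENNReal.ofReal (C x)
        = ENNReal.ofReal (x ^ (-p)) * ENNReal.ofReal (K x) := by
          rw [hCdef]
          rw [ENNReal.ofReal_mul (hK0 x), mul_comm]
      _ = ENNReal.ofReal (x ^ (-p)) * ∫⁻ t in Ioc (0:ℝ) x, ENNReal.ofReal (h t) := by
          rw [hKdef]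
          rw [ofReal_integral_eq_lintegral_ofReal (hInt x hx)
            ((ae_restrict_mem measurableSet_Ioc).mono fun t ht => h0 t ht.1)]
      _ = ∫⁻ t in Ioc (0:ℝ) x, ENNReal.ofReal (x ^ (-p)) * ENNReal.ofReal (h t) :=
          (lintegral_const_mul' _ _ ENNReal.ofReal_ne_top).symm
      _ = ∫⁻ t, Fz (x, t) ∂μ0 := by
          simp_rw [e1]
          rw [lintegral_indicator measurableSet_Iic, hμ0,
            Measure.restrict_restrict measurableSet_Iic]
          congr 1
          rw [inter_comm, Ioi_inter_Iic]
  -- step B : pointwise on t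
  have hB : ∀ t ∈ Ioi (0:ℝ),
      ∫⁻ x, Fz (x, t) ∂μ0 = ENNReal.ofReal (t ^ (1 - p) / (p - 1)) * ENNReal.ofReal (h t) := by
    intro t ht
    have e1 : ∀ x : ℝ, Fz (x, t)
        = (Ici t).indicator (fun x => ENNReal.ofReal (x ^ (-p)) * ENNReal.ofReal (h t)) x := by
      intro x; by_cases hx : t ≤ x <;> simp [hFzdef, indicator, hx]
    simp_rw [e1]
    rw [lintegral_indicator measurableSet_Ici, hμ0,
      Measure.restrict_restrict measurableSet_Ici]
    have e2 : Ici t ∩ Ioi 0 = Ici t :=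
      inter_eq_self_of_subset_left (fun y hy => mem_Ioi.mpr (lt_of_lt_of_le (mem_Ioi.mp ht) (mem_Ici.mp hy)))
    rw [e2, lintegral_mul_const' _ _ ENNReal.ofReal_ne_top]
    congr 1
    rw [Measure.restrict_congr_set Ioi_ae_eq_Ici.symm]
    rw [← ofReal_integral_eq_lintegral_ofReal (integrableOn_Ioi_rpow_of_lt hpm ht)
      ((ae_restrict_mem measurableSet_Ioi).mono fun y hy =>
        Real.rpow_nonneg (le_of_lt (lt_trans ht hy)) _)]
    rw [integral_Ioi_rpow_of_lt hpm ht]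
    congr 1
    rw [show (-p + 1 : ℝ) = 1 - p by ring]
    rw [div_eq_div_iff (by linarith) (by linarith)]
    ring
  -- swap
  have swap : ∫⁻ x, (∫⁻ t, Fz (x, t) ∂μ0) ∂μ0 = ∫⁻ t, (∫⁻ x, Fz (x, t) ∂μ0) ∂μ0 :=
    lintegral_lintegral_swap hFzm
  -- full computation
  have hcomp : ∫⁻ x, ENNReal.ofReal (C x) ∂μ0
      = ENNReal.ofReal (1 / (p - 1)) * ENNReal.ofReal (∫ t in Ioi (0:ℝ), h t * t ^ (1 - p)) := by
    calc ∫⁻ x, ENNReal.ofReal (C x) ∂μ0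
        = ∫⁻ x, (∫⁻ t, Fz (x, t) ∂μ0) ∂μ0 :=
          lintegral_congr_ae ((ae_restrict_mem measurableSet_Ioi).mono fun x hx => hA x hx)
      _ = ∫⁻ t, (∫⁻ x, Fz (x, t) ∂μ0) ∂μ0 := swap
      _ = ∫⁻ t, ENNReal.ofReal (1 / (p - 1)) * ENNReal.ofReal (h t * t ^ (1 - p)) ∂μ0 := by
          refine lintegral_congr_ae ((ae_restrict_mem measurableSet_Ioi).mono fun t ht => ?_)
          dsimp only
          rw [hB t ht]
          rw [show t ^ (1 - p) / (p - 1) = (1 / (p - 1)) * t ^ (1 - p) by ring]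
          rw [ENNReal.ofReal_mul (div_nonneg zero_le_one (by linarith)), mul_assoc,
            ← ENNReal.ofReal_mul (Real.rpow_nonneg (le_of_lt ht) _),
            show t ^ (1 - p) * h t = h t * t ^ (1 - p) by ring]
      _ = ENNReal.ofReal (1 / (p - 1)) * ∫⁻ t, ENNReal.ofReal (h t * t ^ (1 - p)) ∂μ0 :=
          lintegral_const_mul' _ _ ENNReal.ofReal_ne_top
      _ = ENNReal.ofReal (1 / (p - 1)) * ENNReal.ofReal (∫ t in Ioi (0:ℝ), h t * t ^ (1 - p)) := by
          rw [ofReal_integral_eq_lintegral_ofReal hint hnn]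
  -- measurability of C
  have hKmono : MonotoneOn K (Ioi 0) := by
    intro a ha b hb hab
    exact setIntegral_mono_set (hInt b hb)
      ((ae_restrict_mem measurableSet_Ioc).mono fun t ht => h0 t ht.1)
      ((Ioc_subset_Ioc_right hab).eventuallyLE)
  have hmeasC : AEMeasurable C μ0 := by
    have h1 : AEMeasurable K μ0 := aemeasurable_restrict_of_monotoneOn measurableSet_Ioi hKmono
    have h2 : Measurable fun x : ℝ => x ^ (-p) := by fun_prop
    exact h1.mul h2.aemeasurable
  have hfin : HasFiniteIntegral C μ0 := by
    rw [hasFiniteIntegral_iff_ofReal hCnn, hcomp]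
    exact ENNReal.mul_lt_top ENNReal.ofReal_lt_top ENNReal.ofReal_lt_top
  have hCint : IntegrableOn C (Ioi 0) := ⟨hmeasC.aestronglyMeasurable, hfin⟩
  refine ⟨hCint, ?_⟩
  have heq : ENNReal.ofReal (∫ x, C x ∂μ0)
      = ENNReal.ofReal ((1 / (p - 1)) * ∫ t in Ioi (0:ℝ), h t * t ^ (1 - p)) := by
    rw [ofReal_integral_eq_lintegral_ofReal hCint hCnn, hcomp,
      ← ENNReal.ofReal_mul (div_nonneg zero_le_one (by linarith))]
  exact (ENNReal.ofReal_eq_ofReal_iff (integral_nonneg_of_ae hCnn)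
    (mul_nonneg (div_nonneg zero_le_one (by linarith)) (integral_nonneg_of_ae hnn))).mp heq
theorem hardy_phi_psi (f g F G φ ψ : ℝ → ℝ) (p : ℝ) (hp : 1 < p)
    (hf_pos : ∀ x ∈ Ioi (0:ℝ), 0 < f x)
    (hg_pos : ∀ x ∈ Ioi (0:ℝ), 0 < g x)
    (hf_mono : MonotoneOn f (Ioi 0)) (hg_mono : MonotoneOn g (Ioi 0))
    (hφ_nonneg : ∀ x, 0 ≤ φ x) (hψ_nonneg : ∀ x, 0 ≤ ψ x)
    (hφ_mono : Monotone φ) (hψ_mono : Monotone ψ)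
    (hφ_conv : ConvexOn ℝ (Ici 0) φ) (hψ_conv : ConvexOn ℝ (Ici 0) ψ)
    (hφ_sub : ∀ x > (0:ℝ), ∀ y > (0:ℝ), φ (x * y) ≤ φ x * φ y)
    (hψ_sub : ∀ x > (0:ℝ), ∀ y > (0:ℝ), ψ (x * y) ≤ ψ x * ψ y)
    (hF : ∀ x, F x = ∫ t in (0:ℝ)..x, f t)
    (hG : ∀ x, G x = ∫ t in (0:ℝ)..x, g t)
    (hint : IntegrableOn (fun x => φ (f x) * ψ (g x) * x ^ (1 - p)) (Ioi 0)) :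
    ∫ x in Ioi (0:ℝ), φ (F x) * ψ (G x) * x ^ (1 - p) / (φ x * ψ x) ≤
      (1 / (p - 1)) * ∫ x in Ioi (0:ℝ), φ (f x) * ψ (g x) * x ^ (1 - p) := by
  have hφc : ContinuousOn φ (Ici 0) := aux_cont hφ_mono hφ_conv
  have hψc : ContinuousOn ψ (Ici 0) := aux_cont hψ_mono hψ_conv
  have hφf_mono : MonotoneOn (fun t => φ (f t)) (Ioi 0) :=
    fun a ha b hb hab => hφ_mono (hf_mono ha hb hab)
  have hψg_mono : MonotoneOn (fun t => ψ (g t)) (Ioi 0) :=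
    fun a ha b hb hab => hψ_mono (hg_mono ha hb hab)
  have hh_mono : MonotoneOn (fun t => φ (f t) * ψ (g t)) (Ioi 0) :=
    fun a ha b hb hab => mul_le_mul (hφf_mono ha hb hab) (hψg_mono ha hb hab)
      (hψ_nonneg _) (hφ_nonneg _)
  have hh0 : ∀ t ∈ Ioi (0:ℝ), 0 ≤ φ (f t) * ψ (g t) :=
    fun t _ => mul_nonneg (hφ_nonneg _) (hψ_nonneg _)
  obtain ⟨hCint, hCeq⟩ := aux_hardy hp hh_mono hh0 hint
  refine le_trans (integral_mono_of_nonneg ?_ hCint ?_) (le_of_eq hCeq)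
  · refine (ae_restrict_mem measurableSet_Ioi).mono fun x hx => ?_
    exact div_nonneg (mul_nonneg (mul_nonneg (hφ_nonneg _) (hψ_nonneg _))
      (Real.rpow_nonneg (le_of_lt hx) _)) (mul_nonneg (hφ_nonneg _) (hψ_nonneg _))
  refine (ae_restrict_mem measurableSet_Ioi).mono fun x hx => ?_
  have hx : (0:ℝ) < x := hx
  have hxne : x ≠ 0 := ne_of_gt hx
  set Iφ := ∫ t in Ioc (0:ℝ) x, φ (f t) with hIφ
  set Iψ := ∫ t in Ioc (0:ℝ) x, ψ (g t) with hIψ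
  set Hx := ∫ t in Ioc (0:ℝ) x, φ (f t) * ψ (g t) with hHx
  have hHx0 : 0 ≤ Hx := setIntegral_nonneg measurableSet_Ioc fun t ht => hh0 t ht.1
  have hIφ0 : 0 ≤ Iφ := setIntegral_nonneg measurableSet_Ioc fun t _ => hφ_nonneg _
  have hIψ0 : 0 ≤ Iψ := setIntegral_nonneg measurableSet_Ioc fun t _ => hψ_nonneg _
  show φ (F x) * ψ (G x) * x ^ (1 - p) / (φ x * ψ x) ≤ Hx * x ^ (-p)
  by_cases hd : φ x * ψ x = 0
  · rw [hd, div_zero]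
    exact mul_nonneg hHx0 (Real.rpow_nonneg (le_of_lt hx) _)
  have hpos : 0 < φ x * ψ x :=
    lt_of_le_of_ne (mul_nonneg (hφ_nonneg _) (hψ_nonneg _)) (Ne.symm hd)
  have hφx : 0 < φ x := lt_of_le_of_ne (hφ_nonneg x) (Ne.symm (left_ne_zero_of_mul hd))
  have hψx : 0 < ψ x := lt_of_le_of_ne (hψ_nonneg x) (Ne.symm (right_ne_zero_of_mul hd))
  -- integrabilities on Ioc 0 x
  have hfI : IntegrableOn f (Ioc 0 x) :=
    aux_int hx (hf_mono.mono Ioc_subset_Ioi_self) (fun t ht => (hf_pos t ht.1).le)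
  have hgI : IntegrableOn g (Ioc 0 x) :=
    aux_int hx (hg_mono.mono Ioc_subset_Ioi_self) (fun t ht => (hg_pos t ht.1).le)
  have hφfI : IntegrableOn (fun t => φ (f t)) (Ioc 0 x) :=
    aux_int hx (hφf_mono.mono Ioc_subset_Ioi_self) (fun t _ => hφ_nonneg _)
  have hψgI : IntegrableOn (fun t => ψ (g t)) (Ioc 0 x) :=
    aux_int hx (hψg_mono.mono Ioc_subset_Ioi_self) (fun t _ => hψ_nonneg _)
  have hhI : IntegrableOn (fun t => φ (f t) * ψ (g t)) (Ioc 0 x) :=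
    aux_int hx (hh_mono.mono Ioc_subset_Ioi_self) (fun t ht => hh0 t ht.1)
  -- averages setup
  set μx := volume.restrict (Ioc (0:ℝ) x) with hμx
  haveI : IsFiniteMeasure μx :=
    ⟨by rw [hμx, Measure.restrict_apply_univ]; exact measure_Ioc_lt_top⟩
  haveI : NeZero μx := by
    refine ⟨Measure.measure_univ_ne_zero.mp ?_⟩
    rw [hμx, Measure.restrict_apply_univ, Real.volume_Ioc, sub_zero]
    simp [ENNReal.ofReal_eq_zero, not_le, hx]
  have hav : ∀ u : ℝ → ℝ, ⨍ t, u t ∂μx = (∫ t in Ioc (0:ℝ) x, u t) / x := by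
    intro u
    rw [average_eq, hμx, measureReal_def, Measure.restrict_apply_univ, Real.volume_Ioc, sub_zero,
      ENNReal.toReal_ofReal hx.le, smul_eq_mul, inv_mul_eq_div]
  -- F and G as set integrals, positivity
  have hFx : F x = ∫ t in Ioc (0:ℝ) x, f t := by
    rw [hF x, intervalIntegral.integral_of_le hx.le]
  have hGx : G x = ∫ t in Ioc (0:ℝ) x, g t := by
    rw [hG x, intervalIntegral.integral_of_le hx.le]
  have hvol : (0:ℝ≥0∞) < volume (Ioc (0:ℝ) x) := by
    rw [Real.volume_Ioc, sub_zero]; simpa [ENNReal.ofReal_eq_zero, not_le] using hx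
  have hFpos : 0 < F x := by
    rw [hFx]
    refine (setIntegral_pos_iff_support_of_nonneg_ae
      ((ae_restrict_mem measurableSet_Ioc).mono fun t ht => (hf_pos t ht.1).le) hfI).2 ?_
    have : Ioc (0:ℝ) x ⊆ Function.support f := fun t ht => ne_of_gt (hf_pos t ht.1)
    rwa [inter_eq_self_of_subset_right this]
  have hGpos : 0 < G x := by
    rw [hGx]
    refine (setIntegral_pos_iff_support_of_nonneg_ae
      ((ae_restrict_mem measurableSet_Ioc).mono fun t ht => (hg_pos t ht.1).le) hgI).2 ?_
    have : Ioc (0:ℝ) x ⊆ Function.support g := fun t ht => ne_of_gt (hg_pos t ht.1)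
    rwa [inter_eq_self_of_subset_right this]
  -- Jensen for φ
  have jφ : φ (F x) ≤ (Iφ / x) * φ x := by
    have hmem : ∀ᵐ t ∂μx, f t ∈ Ici (0:ℝ) :=
      (ae_restrict_mem measurableSet_Ioc).mono fun t ht => (hf_pos t ht.1).le
    have j := hφ_conv.map_average_le hφc isClosed_Ici hmem hfI hφfI
    rw [hav f, hav (fun t => φ (f t)), ← hFx, ← hIφ] at j
    have step1 : φ (F x) = φ ((F x / x) * x) := by rw [div_mul_cancel₀ _ hxne]
    have step2 : φ ((F x / x) * x) ≤ φ (F x / x) * φ x :=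
      hφ_sub _ (div_pos hFpos hx) _ hx
    exact step1 ▸ le_trans step2 (mul_le_mul_of_nonneg_right j (hφ_nonneg x))
  -- Jensen for ψ
  have jψ : ψ (G x) ≤ (Iψ / x) * ψ x := by
    have hmem : ∀ᵐ t ∂μx, g t ∈ Ici (0:ℝ) :=
      (ae_restrict_mem measurableSet_Ioc).mono fun t ht => (hg_pos t ht.1).le
    have j := hψ_conv.map_average_le hψc isClosed_Ici hmem hgI hψgI
    rw [hav g, hav (fun t => ψ (g t)), ← hGx, ← hIψ] at j
    have step1 : ψ (G x) = ψ ((G x / x) * x) := by rw [div_mul_cancel₀ _ hxne]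
    have step2 : ψ ((G x / x) * x) ≤ ψ (G x / x) * ψ x :=
      hψ_sub _ (div_pos hGpos hx) _ hx
    exact step1 ▸ le_trans step2 (mul_le_mul_of_nonneg_right j (hψ_nonneg x))
  -- Chebyshev
  have cheb : Iφ * Iψ ≤ x * Hx :=
    aux_cheby hx (hφf_mono.mono Ioc_subset_Ioi_self) (hψg_mono.mono Ioc_subset_Ioi_self)
      hφfI hψgI hhI
  -- combine
  have jφ' : φ (F x) * x ≤ Iφ * φ x := by
    have := mul_le_mul_of_nonneg_right jφ hx.le
    calc φ (F x) * x ≤ (Iφ / x) * φ x * x := this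
      _ = Iφ * φ x := by field_simp
  have jψ' : ψ (G x) * x ≤ Iψ * ψ x := by
    have := mul_le_mul_of_nonneg_right jψ hx.le
    calc ψ (G x) * x ≤ (Iψ / x) * ψ x * x := this
      _ = Iψ * ψ x := by field_simp
  have big : (φ (F x) * x) * (ψ (G x) * x) ≤ (Iφ * φ x) * (Iψ * ψ x) :=
    mul_le_mul jφ' jψ' (mul_nonneg (hψ_nonneg _) hx.le)
      (mul_nonneg hIφ0 (hφ_nonneg _))
  have cheb2 : (Iφ * φ x) * (Iψ * ψ x) ≤ (x * Hx) * (φ x * ψ x) := by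
    have := mul_le_mul_of_nonneg_right cheb (le_of_lt hpos)
    nlinarith [this]
  have k1 : φ (F x) * ψ (G x) * x ≤ Hx * (φ x * ψ x) := by
    refine le_of_mul_le_mul_right ?_ hx
    nlinarith [big, cheb2]
  have hxp : x ^ (1 - p) = x ^ (-p) * x := by
    rw [show (1 - p : ℝ) = -p + 1 by ring, Real.rpow_add hx, Real.rpow_one]
  rw [div_le_iff₀ hpos, hxp]
  calc φ (F x) * ψ (G x) * (x ^ (-p) * x)
      = (φ (F x) * ψ (G x) * x) * x ^ (-p) := by ring
    _ ≤ (Hx * (φ x * ψ x)) * x ^ (-p) :=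
        mul_le_mul_of_nonneg_right k1 (Real.rpow_nonneg hx.le _)
    _ = Hx * x ^ (-p) * (φ x * ψ x) := by ring
end

section
/- Let f ≥ 0 be non-decreasing on (0,∞), F(x)=∫₀ˣ f; g > 0 continuous and non-increasing on (0,∞), G(x)=∫₀ˣ g; φ ≥ 0 non-decreasing; 0 < b ≤ ∞. If φ(f(x)/g(x)) is integrable on (0,b), then ∫₀ᵇ φ(F(x)/G(x)) dx ≤ ∫₀ᵇ φ(f(x)/g(x)) dx. -/
open MeasureTheory Set intervalIntegral ENNReal

theorem hardy_phi_ratio (f g F G φ : ℝ → ℝ) (b : ℝ≥0∞) (hb : 0 < b)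
    (hf_nonneg : ∀ x ∈ Ioi (0:ℝ), 0 ≤ f x)
    (hf_mono : MonotoneOn f (Ioi 0))
    (hg_pos : ∀ x ∈ Ioi (0:ℝ), 0 < g x)
    (hg_cont : ContinuousOn g (Ioi 0))
    (hg_anti : AntitoneOn g (Ioi 0))
    (hφ_nonneg : ∀ x, 0 ≤ φ x) (hφ_mono : Monotone φ)
    (hF : ∀ x, F x = ∫ t in (0:ℝ)..x, f t)
    (hG : ∀ x, G x = ∫ t in (0:ℝ)..x, g t)
    (hint : IntegrableOn (fun x => φ (f x / g x)) {x : ℝ | 0 < x ∧ ENNReal.ofReal x < b}) :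
    ∫ x in {x : ℝ | 0 < x ∧ ENNReal.ofReal x < b}, φ (F x / G x) ≤
      ∫ x in {x : ℝ | 0 < x ∧ ENNReal.ofReal x < b}, φ (f x / g x) := by
  set s : Set ℝ := {x : ℝ | 0 < x ∧ ENNReal.ofReal x < b} with hsdef
  have hs_meas : MeasurableSet s := by
    have : s = Ioi 0 ∩ ENNReal.ofReal ⁻¹' (Iio b) := by
      ext x; simp [hsdef]
    rw [this]
    exact measurableSet_Ioi.inter (ENNReal.measurable_ofReal measurableSet_Iio)
  have key : ∀ x ∈ s, φ (F x / G x) ≤ φ (f x / g x) := by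
    intro x hx
    obtain ⟨hx0, -⟩ := hx
    apply hφ_mono
    have hgx := hg_pos x hx0
    have hfx := hf_nonneg x hx0
    have hfg : 0 ≤ f x / g x := div_nonneg hfx hgx.le
    -- f is integrable on Ioc 0 x
    have hf_meas : AEMeasurable f (volume.restrict (Ioc 0 x)) :=
      aemeasurable_restrict_of_monotoneOn measurableSet_Ioc
        (hf_mono.mono Ioc_subset_Ioi_self)
    have hf_int : IntegrableOn f (Ioc 0 x) := by
      refine Integrable.mono' (g := fun _ => f x) ((integrableOn_const_iff (C := f x)).mpr (Or.inr (by simp))) hf_meas.aestronglyMeasurable ?_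
      · rw [ae_restrict_iff' measurableSet_Ioc]
        filter_upwards with t ht
        rw [Real.norm_eq_abs, abs_of_nonneg (hf_nonneg t ht.1)]
        exact hf_mono ht.1 hx0 ht.2
    have hFx : F x = ∫ t in Ioc 0 x, f t := by
      rw [hF x, intervalIntegral.integral_of_le hx0.le]
    have hF_nonneg : 0 ≤ F x := by
      rw [hFx]
      exact setIntegral_nonneg measurableSet_Ioc (fun t ht => hf_nonneg t ht.1)
    by_cases hg_int : IntegrableOn g (Ioc 0 x)
    · have hGx : G x = ∫ t in Ioc 0 x, g t := by
        rw [hG x, intervalIntegral.integral_of_le hx0.le]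
      have hG_pos : 0 < G x := by
        rw [hG x]
        apply intervalIntegral.intervalIntegral_pos_of_pos_on
        · exact (intervalIntegrable_iff_integrableOn_Ioc_of_le hx0.le).mpr hg_int
        · intro t ht; exact hg_pos t ht.1
        · exact hx0
      rw [div_le_div_iff₀ hG_pos hgx, hFx, hGx]
      calc (∫ t in Ioc 0 x, f t) * g x = ∫ t in Ioc 0 x, f t * g x := by
            rw [MeasureTheory.integral_mul_const]
        _ ≤ ∫ t in Ioc 0 x, f x * g t := by
            refine setIntegral_mono_on (hf_int.mul_const _) (hg_int.const_mul _)
              measurableSet_Ioc ?_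
            intro t ht
            exact mul_le_mul (hf_mono ht.1 hx0 ht.2) (hg_anti ht.1 hx0 ht.2)
              (hg_pos x hx0).le hfx
        _ = f x * ∫ t in Ioc 0 x, g t := by rw [MeasureTheory.integral_const_mul]
    · have hGx : G x = 0 := by
        rw [hG x]
        apply intervalIntegral.integral_undef
        rw [intervalIntegrable_iff_integrableOn_Ioc_of_le hx0.le]
        exact hg_int
      rw [hGx, _root_.div_zero]
      exact hfg
  apply integral_mono_of_nonneg
  · filter_upwards with x using hφ_nonneg _
  · exact hint
  · show ∀ᵐ x ∂volume.restrict s, φ (F x / G x) ≤ φ (f x / g x)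
    rw [ae_restrict_iff' hs_meas]
    filter_upwards with x hx using key x hx
end

section
/- Let f ≥ 0 be non-decreasing on (0,∞) with F(x)=∫₀ˣ f, g > 0 continuous non-increasing with G(x)=∫₀ˣ g, p ≥ 1, 0 < b ≤ ∞. Then ∫₀ᵇ (F(x)/G(x))^p dx ≤ ∫₀ᵇ (f(x)/g(x))^p dx. -/
open MeasureTheory Set intervalIntegral ENNReal

theorem hardy_pow_ratio (f g F G : ℝ → ℝ) (p : ℝ) (hp : 1 ≤ p) (b : ℝ≥0∞) (hb : 0 < b)
    (hf_nonneg : ∀ x ∈ Ioi (0:ℝ), 0 ≤ f x)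
    (hf_mono : MonotoneOn f (Ioi 0))
    (hg_pos : ∀ x ∈ Ioi (0:ℝ), 0 < g x)
    (hg_cont : ContinuousOn g (Ioi 0))
    (hg_anti : AntitoneOn g (Ioi 0))
    (hF : ∀ x, F x = ∫ t in (0:ℝ)..x, f t)
    (hG : ∀ x, G x = ∫ t in (0:ℝ)..x, g t)
    (hint : IntegrableOn (fun x => (f x / g x) ^ p) {x : ℝ | 0 < x ∧ ENNReal.ofReal x < b}) :
    ∫ x in {x : ℝ | 0 < x ∧ ENNReal.ofReal x < b}, (F x / G x) ^ p ≤
      ∫ x in {x : ℝ | 0 < x ∧ ENNReal.ofReal x < b}, (f x / g x) ^ p := by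
  have hp0 : (0:ℝ) < p := lt_of_lt_of_le zero_lt_one hp
  set S := {x : ℝ | 0 < x ∧ ENNReal.ofReal x < b} with hSdef
  have hS : MeasurableSet S := by
    have : S = Ioi 0 ∩ ENNReal.ofReal ⁻¹' (Iio b) := rfl
    rw [this]
    exact measurableSet_Ioi.inter (ENNReal.measurable_ofReal measurableSet_Iio)
  have hFG_nonneg : ∀ x : ℝ, 0 < x → 0 ≤ F x / G x := by
    intro x hx
    have hF0 : 0 ≤ F x := by
      rw [hF, intervalIntegral.integral_of_le hx.le]
      exact setIntegral_nonneg measurableSet_Ioc fun t ht => hf_nonneg t ht.1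
    have hG0 : 0 ≤ G x := by
      rw [hG, intervalIntegral.integral_of_le hx.le]
      exact setIntegral_nonneg measurableSet_Ioc fun t ht => (hg_pos t ht.1).le
    exact div_nonneg hF0 hG0
  have key : ∀ x : ℝ, 0 < x → (F x / G x) ^ p ≤ (f x / g x) ^ p := by
    intro x hx
    have hfx : 0 ≤ f x := hf_nonneg x hx
    have hgx : 0 < g x := hg_pos x hx
    by_cases hgi : IntervalIntegrable g volume 0 x
    · have hFle : F x ≤ x * f x := by
        have hb1 : ‖∫ t in (0:ℝ)..x, f t‖ ≤ f x * |x - 0| := by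
          refine intervalIntegral.norm_integral_le_of_norm_le_const ?_
          intro t ht
          rw [Set.uIoc_of_le hx.le] at ht
          rw [Real.norm_eq_abs, abs_of_nonneg (hf_nonneg t ht.1)]
          exact hf_mono ht.1 hx ht.2
        rw [sub_zero, abs_of_pos hx, Real.norm_eq_abs] at hb1
        calc F x ≤ |∫ t in (0:ℝ)..x, f t| := by rw [hF]; exact le_abs_self _
          _ ≤ f x * x := hb1
          _ = x * f x := mul_comm _ _
      have hGge : x * g x ≤ G x := by
        rw [hG, intervalIntegral.integral_of_le hx.le]
        have hconst : ∫ _ in Ioc (0:ℝ) x, g x = x * g x := by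
          rw [setIntegral_const, Measure.real, Real.volume_Ioc, sub_zero,
            ENNReal.toReal_ofReal hx.le, smul_eq_mul]
        rw [← hconst]
        refine setIntegral_mono_on (integrableOn_const (ne_of_lt ?_)) hgi.1
          measurableSet_Ioc ?_
        · rw [Real.volume_Ioc]; exact ENNReal.ofReal_lt_top
        · intro t ht
          exact hg_anti ht.1 hx ht.2
      have h1 : F x / G x ≤ f x / g x := by
        have hxg : 0 < x * g x := mul_pos hx hgx
        calc F x / G x ≤ (x * f x) / (x * g x) :=
              div_le_div₀ (by positivity) hFle hxg hGge
          _ = f x / g x := mul_div_mul_left _ _ hx.ne'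
      exact Real.rpow_le_rpow (hFG_nonneg x hx) h1 hp0.le
    · have hG0 : G x = 0 := by rw [hG]; exact intervalIntegral.integral_undef hgi
      rw [hG0, _root_.div_zero, Real.zero_rpow hp0.ne']
      exact Real.rpow_nonneg (div_nonneg hfx hgx.le) p
  refine integral_mono_of_nonneg ?_ hint ?_
  · exact (ae_restrict_iff' hS).2 (ae_of_all _ fun x hx =>
      Real.rpow_nonneg (hFG_nonneg x hx.1) p)
  · exact (ae_restrict_iff' hS).2 (ae_of_all _ fun x hx => key x hx.1)
end

section
/- Let φ ≥ 0 be twice differentiable, convex, submultiplicative on (0,∞) with φ(0)=0. Let q ∈ ℕ, p > 1, f ≥ 0 with F(x)=∫₀ˣ f. If x^{2-p} φ(f(x))/φ(x) is integrable, then ∫₀^∞ x^{2-p} φ(x^q F(x)) / φ(x)^{q+2} dx ≤ (1/(p-1)) ∫₀^∞ x^{2-p} φ(f(x))/φ(x) dx. -/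
open MeasureTheory Set intervalIntegral

lemma phi_pow_mul (φ : ℝ → ℝ)
    (hφ_nonneg : ∀ x ∈ Ici (0:ℝ), 0 ≤ φ x)
    (hφ_sub : ∀ x > (0:ℝ), ∀ y > (0:ℝ), φ (x * y) ≤ φ x * φ y) :
    ∀ n : ℕ, ∀ x > (0:ℝ), ∀ y > (0:ℝ), φ (x ^ n * y) ≤ φ x ^ n * φ y := by
  intro n
  induction n with
  | zero => intro x hx y hy; simp
  | succ n ih =>
    intro x hx y hy
    have hxny : (0:ℝ) < x ^ n * y := by positivity
    have h1 : φ (x * (x ^ n * y)) ≤ φ x * φ (x ^ n * y) := hφ_sub x hx _ hxny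
    have h2 := ih x hx y hy
    have hx0 : 0 ≤ φ x := hφ_nonneg x (le_of_lt hx)
    calc φ (x ^ (n+1) * y) = φ (x * (x ^ n * y)) := by ring_nf
      _ ≤ φ x * φ (x ^ n * y) := h1
      _ ≤ φ x * (φ x ^ n * φ y) := mul_le_mul_of_nonneg_left h2 hx0
      _ = φ x ^ (n+1) * φ y := by ring

theorem hardy_submultiplicative (φ f F : ℝ → ℝ) (q : ℕ) (p : ℝ) (hp : 1 < p)
    (hφ_nonneg : ∀ x ∈ Ici (0:ℝ), 0 ≤ φ x)
    (hφ_diff : ∀ x ∈ Ici (0:ℝ), DifferentiableAt ℝ φ x)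
    (hφ_diff2 : ∀ x ∈ Ici (0:ℝ), DifferentiableAt ℝ (deriv φ) x)
    (hφ_conv : ConvexOn ℝ (Ici 0) φ)
    (hφ_sub : ∀ x > (0:ℝ), ∀ y > (0:ℝ), φ (x * y) ≤ φ x * φ y)
    (hφ0 : φ 0 = 0)
    (hf_nonneg : ∀ x ∈ Ioi (0:ℝ), 0 ≤ f x)
    (hF : ∀ x, F x = ∫ t in (0:ℝ)..x, f t)
    (hint : IntegrableOn (fun x => x ^ (2 - p) * (φ (f x) / φ x)) (Ioi 0)) :
    ∫ x in Ioi (0:ℝ), x ^ (2 - p) * (φ (x ^ q * F x) / φ x ^ (q + 2)) ≤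
      (1 / (p - 1)) * ∫ x in Ioi (0:ℝ), x ^ (2 - p) * (φ (f x) / φ x) := by
  by_cases hφpos : ∀ x : ℝ, 0 < x → 0 < φ x
  case neg =>
    -- degenerate case: φ vanishes somewhere on (0,∞), hence everywhere on (0,∞)
    push_neg at hφpos
    obtain ⟨a, ha, hφa⟩ := hφpos
    have hφa0 : φ a = 0 := le_antisymm hφa (hφ_nonneg a ha.le)
    have hzero : ∀ z : ℝ, 0 < z → φ z = 0 := by
      intro z hz
      have h1 := hφ_sub a ha (z / a) (div_pos hz ha)
      rw [mul_div_cancel₀ z (ne_of_gt ha), hφa0, zero_mul] at h1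
      exact le_antisymm h1 (hφ_nonneg z hz.le)
    have hL : ∫ x in Ioi (0:ℝ), x ^ (2 - p) * (φ (x ^ q * F x) / φ x ^ (q + 2)) = 0 := by
      rw [setIntegral_congr_fun measurableSet_Ioi (g := fun _ => (0:ℝ))
        (fun x hx => by
          have : φ x = 0 := hzero x hx
          simp [this, zero_pow, Nat.succ_ne_zero])]
      simp
    have hR : ∫ x in Ioi (0:ℝ), x ^ (2 - p) * (φ (f x) / φ x) = 0 := by
      rw [setIntegral_congr_fun measurableSet_Ioi (g := fun _ => (0:ℝ))
        (fun x hx => by simp [hzero x hx])]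
      simp
    rw [hL, hR]; simp
  case pos =>
    -- main case : φ > 0 on (0,∞)
    have hcont : ContinuousOn φ (Ici 0) :=
      fun x hx => (hφ_diff x hx).continuousAt.continuousWithinAt
    have hp1 : (0:ℝ) < p - 1 := by linarith
    have hFnn : ∀ x : ℝ, 0 < x → 0 ≤ F x := by
      intro x hx
      rw [hF x, intervalIntegral.integral_of_le hx.le]
      exact setIntegral_nonneg measurableSet_Ioc (fun t ht => hf_nonneg t ht.1)
    -- measurable nonnegative representative of the RHS integrand
    obtain ⟨h₀, h₀meas, hae⟩ := hint.1.aemeasurable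
    set h₁ : ℝ → ℝ := fun t => max (h₀ t) 0 with hh₁def
    have h₁meas : Measurable h₁ := h₀meas.max measurable_const
    have h₁nonneg : ∀ t, 0 ≤ h₁ t := fun t => le_max_right _ _
    have hh₁ : (fun x : ℝ => x ^ (2 - p) * (φ (f x) / φ x)) =ᵐ[volume.restrict (Ioi 0)] h₁ := by
      filter_upwards [hae, ae_restrict_mem measurableSet_Ioi] with t ht htm
      have hnn : 0 ≤ t ^ (2 - p) * (φ (f t) / φ t) :=
        mul_nonneg (Real.rpow_nonneg (le_of_lt htm) _)
          (div_nonneg (hφ_nonneg _ (hf_nonneg t htm)) (hφ_nonneg t (mem_Ici.2 (le_of_lt htm))))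
      show t ^ (2 - p) * (φ (f t) / φ t) = max (h₀ t) 0
      rw [max_eq_left, ← ht]
      rw [← ht]; exact hnn
    have hh₁int : IntegrableOn h₁ (Ioi 0) := hint.congr_fun_ae hh₁
    -- the auxiliary kernel functions
    set g₁ : ℝ → ℝ := fun t => t ^ (p - 1) * h₁ t with hg₁def
    have g₁meas : Measurable g₁ := by fun_prop
    have g₁nonneg : ∀ t : ℝ, 0 < t → 0 ≤ g₁ t :=
      fun t ht => mul_nonneg (Real.rpow_nonneg ht.le _) (h₁nonneg t)
    have hg₁int : ∀ x : ℝ, 0 < x → IntegrableOn g₁ (Ioc 0 x) := by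
      intro x hx
      have hbd : IntegrableOn (fun t => x ^ (p - 1) * h₁ t) (Ioc 0 x) :=
        (hh₁int.mono_set Ioc_subset_Ioi_self).const_mul _
      refine Integrable.mono' hbd g₁meas.aestronglyMeasurable ?_
      refine (ae_restrict_iff' measurableSet_Ioc).2 (ae_of_all _ fun t ht => ?_)
      rw [Real.norm_of_nonneg (g₁nonneg t ht.1)]
      exact mul_le_mul_of_nonneg_right
        (Real.rpow_le_rpow ht.1.le ht.2 (by linarith)) (h₁nonneg t)
    set M : ℝ → ℝ := fun x => ∫ t in Ioc (0:ℝ) x, g₁ t with hMdef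
    have Mnonneg : ∀ x, 0 ≤ M x :=
      fun x => setIntegral_nonneg measurableSet_Ioc (fun t ht => g₁nonneg t ht.1)
    have Mmono : Monotone M := by
      intro a b hab
      by_cases hb : 0 < b
      · exact setIntegral_mono_set (hg₁int b hb)
          ((ae_restrict_iff' measurableSet_Ioc).2 (ae_of_all _ fun t ht => g₁nonneg t ht.1))
          (HasSubset.Subset.eventuallyLE (Ioc_subset_Ioc_right hab))
      · push_neg at hb
        have h1 : Ioc (0:ℝ) a = ∅ := Ioc_eq_empty (by intro h; exact absurd (h.trans_le hab) (not_lt.2 hb))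
        have h2 : Ioc (0:ℝ) b = ∅ := Ioc_eq_empty (by intro h; exact absurd h (not_lt.2 hb))
        simp [hMdef, h1, h2]
    have Mmeas : Measurable M := Mmono.measurable
    set B : ℝ → ℝ := fun x => x ^ (-p) * M x with hBdef
    have Bmeas : Measurable B := by
      have : Measurable fun x : ℝ => x ^ (-p) := by fun_prop
      exact this.mul Mmeas
    have Bnonneg : ∀ x : ℝ, 0 < x → 0 ≤ B x :=
      fun x hx => mul_nonneg (Real.rpow_nonneg hx.le _) (Mnonneg x)
    -- the kernel for Tonelli
    set k : ℝ → ℝ → ENNReal := fun x t =>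
      if t ≤ x then ENNReal.ofReal (x ^ (-p)) * ENNReal.ofReal (g₁ t) else 0 with hkdef
    have hkmeas : Measurable (Function.uncurry k) := by
      have : Function.uncurry k = fun z : ℝ × ℝ =>
          Set.indicator {z : ℝ × ℝ | z.2 ≤ z.1}
            (fun z => ENNReal.ofReal (z.1 ^ (-p)) * ENNReal.ofReal (g₁ z.2)) z := by
        ext z
        by_cases hz : z.2 ≤ z.1 <;>
          simp [Function.uncurry, hkdef, hz, Set.indicator_apply]
      rw [this]
      exact Measurable.indicator (by fun_prop) (measurableSet_le measurable_snd measurable_fst)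
    have step1 : ∀ x ∈ Ioi (0:ℝ), ∫⁻ t in Ioi (0:ℝ), k x t = ENNReal.ofReal (B x) := by
      intro x hx
      have hIoc : Iic x ∩ Ioi (0:ℝ) = Ioc 0 x := by
        ext t; simp only [mem_inter_iff, mem_Iic, mem_Ioi, mem_Ioc]; tauto
      calc ∫⁻ t in Ioi (0:ℝ), k x t
          = ∫⁻ t in Ioi (0:ℝ), (Iic x).indicator
              (fun t => ENNReal.ofReal (x ^ (-p)) * ENNReal.ofReal (g₁ t)) t := by
            apply lintegral_congr; intro t
            by_cases hc : t ≤ x <;> simp [hkdef, hc, Set.indicator_apply]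
        _ = ∫⁻ t in Ioc (0:ℝ) x, ENNReal.ofReal (x ^ (-p)) * ENNReal.ofReal (g₁ t) := by
            rw [lintegral_indicator measurableSet_Iic,
              Measure.restrict_restrict measurableSet_Iic, hIoc]
        _ = ENNReal.ofReal (x ^ (-p)) * ∫⁻ t in Ioc (0:ℝ) x, ENNReal.ofReal (g₁ t) :=
            lintegral_const_mul _ (by fun_prop)
        _ = ENNReal.ofReal (x ^ (-p)) * ENNReal.ofReal (∫ t in Ioc (0:ℝ) x, g₁ t) := by
            rw [ofReal_integral_eq_lintegral_ofReal (hg₁int x hx)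
              ((ae_restrict_iff' measurableSet_Ioc).2 (ae_of_all _ fun t ht => g₁nonneg t ht.1))]
        _ = ENNReal.ofReal (B x) := by
            rw [← ENNReal.ofReal_mul (Real.rpow_nonneg (le_of_lt hx) _)]
    have hplt : -p < -1 := by linarith
    have step2 : ∀ t ∈ Ioi (0:ℝ), ∫⁻ x in Ioi (0:ℝ), k x t
        = ENNReal.ofReal (h₁ t * (1 / (p - 1))) := by
      intro t ht
      have htpos : (0:ℝ) < t := ht
      calc ∫⁻ x in Ioi (0:ℝ), k x t
          = ∫⁻ x in Ioi (0:ℝ), (Ici t).indicator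
              (fun x => ENNReal.ofReal (x ^ (-p)) * ENNReal.ofReal (g₁ t)) x := by
            apply lintegral_congr; intro x
            by_cases hc : t ≤ x <;> simp [hkdef, hc, Set.indicator_apply]
        _ = ∫⁻ x in Ici t, ENNReal.ofReal (x ^ (-p)) * ENNReal.ofReal (g₁ t) := by
            rw [lintegral_indicator measurableSet_Ici,
              Measure.restrict_restrict measurableSet_Ici]
            have hIci : Ici t ∩ Ioi (0:ℝ) = Ici t :=
              inter_eq_self_of_subset_left (fun y hy => lt_of_lt_of_le htpos (mem_Ici.1 hy))
            rw [hIci]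
        _ = ∫⁻ x in Ioi t, ENNReal.ofReal (x ^ (-p)) * ENNReal.ofReal (g₁ t) := by
            rw [Measure.restrict_congr_set Ioi_ae_eq_Ici]
        _ = (∫⁻ x in Ioi t, ENNReal.ofReal (x ^ (-p))) * ENNReal.ofReal (g₁ t) :=
            lintegral_mul_const _ (by fun_prop)
        _ = ENNReal.ofReal (t ^ (1 - p) / (p - 1)) * ENNReal.ofReal (g₁ t) := by
            rw [← ofReal_integral_eq_lintegral_ofReal
              (integrableOn_Ioi_rpow_of_lt hplt htpos)
              ((ae_restrict_iff' measurableSet_Ioi).2 (ae_of_all _ fun y hy =>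
                Real.rpow_nonneg (le_of_lt (lt_trans htpos hy)) _)),
              integral_Ioi_rpow_of_lt hplt htpos]
            congr 1
            rw [show -p + 1 = 1 - p by ring]
            congr 1
            have hne : p - 1 ≠ 0 := ne_of_gt hp1
            have hne2 : (1:ℝ) - p ≠ 0 := by intro hcon; apply hne; linarith
            rw [div_eq_div_iff hne2 hne]
            ring
        _ = ENNReal.ofReal (h₁ t * (1 / (p - 1))) := by
            rw [← ENNReal.ofReal_mul (by positivity)]
            congr 1
            have hpow : t ^ (1 - p) * t ^ (p - 1) = 1 := by
              rw [← Real.rpow_add htpos]; norm_num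
            calc t ^ (1 - p) / (p - 1) * g₁ t
                = (t ^ (1 - p) * t ^ (p - 1)) * h₁ t * (1 / (p - 1)) := by
                  rw [hg₁def]; ring
              _ = h₁ t * (1 / (p - 1)) := by rw [hpow]; ring
    have hA : ∫⁻ x in Ioi (0:ℝ), ENNReal.ofReal (B x)
        = ENNReal.ofReal ((1 / (p - 1)) * ∫ t in Ioi (0:ℝ), h₁ t) := by
      calc ∫⁻ x in Ioi (0:ℝ), ENNReal.ofReal (B x)
          = ∫⁻ x in Ioi (0:ℝ), ∫⁻ t in Ioi (0:ℝ), k x t :=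
            (setLIntegral_congr_fun measurableSet_Ioi step1).symm
        _ = ∫⁻ t in Ioi (0:ℝ), ∫⁻ x in Ioi (0:ℝ), k x t :=
            lintegral_lintegral_swap hkmeas.aemeasurable
        _ = ∫⁻ t in Ioi (0:ℝ), ENNReal.ofReal (h₁ t * (1 / (p - 1))) :=
            setLIntegral_congr_fun measurableSet_Ioi step2
        _ = ENNReal.ofReal (∫ t in Ioi (0:ℝ), h₁ t * (1 / (p - 1))) :=
            (ofReal_integral_eq_lintegral_ofReal (hh₁int.mul_const _)
              (ae_of_all _ fun t => mul_nonneg (h₁nonneg t) (by positivity))).symm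
        _ = ENNReal.ofReal ((1 / (p - 1)) * ∫ t in Ioi (0:ℝ), h₁ t) := by
            rw [MeasureTheory.integral_mul_const]; congr 1; ring
    have hBnonneg_ae : 0 ≤ᵐ[volume.restrict (Ioi (0:ℝ))] B :=
      (ae_restrict_iff' measurableSet_Ioi).2 (ae_of_all _ fun x hx => Bnonneg x hx)
    have hBint : IntegrableOn B (Ioi 0) := by
      refine ⟨Bmeas.aestronglyMeasurable, ?_⟩
      rw [hasFiniteIntegral_iff_ofReal hBnonneg_ae, hA]
      exact ENNReal.ofReal_lt_top
    have hBval : ∫ x in Ioi (0:ℝ), B x = (1 / (p - 1)) * ∫ t in Ioi (0:ℝ), h₁ t := by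
      rw [integral_eq_lintegral_of_nonneg_ae hBnonneg_ae Bmeas.aestronglyMeasurable, hA,
        ENNReal.toReal_ofReal]
      exact mul_nonneg (by positivity) (integral_nonneg h₁nonneg)
    -- the pointwise bound
    have hLB : ∀ x ∈ Ioi (0:ℝ), x ^ (2 - p) * (φ (x ^ q * F x) / φ x ^ (q + 2)) ≤ B x := by
      intro x hx
      have hx : (0:ℝ) < x := hx
      have hφx : 0 < φ x := hφpos x hx
      have hFxnn := hFnn x hx
      rcases eq_or_lt_of_le hFxnn with hF0 | hFpos
      · have hzero : φ (x ^ q * F x) = 0 := by rw [← hF0, mul_zero, hφ0]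
        rw [hzero, zero_div, mul_zero]
        exact Bnonneg x hx
      · -- F x > 0, so f is integrable on (0, x]
        have hfi : IntegrableOn f (Ioc 0 x) := by
          by_contra hni
          rw [hF x, intervalIntegral.integral_of_le hx.le, integral_undef hni] at hFpos
          exact lt_irrefl 0 hFpos
        set μx := volume.restrict (Ioc (0:ℝ) x) with hμxdef
        have hμuniv : (μx univ).toReal = x := by
          rw [hμxdef, Measure.restrict_apply_univ, Real.volume_Ioc, sub_zero,
            ENNReal.toReal_ofReal hx.le]
        haveI : IsFiniteMeasure μx := ⟨by
          rw [hμxdef, Measure.restrict_apply_univ, Real.volume_Ioc]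
          exact ENNReal.ofReal_lt_top⟩
        haveI : NeZero μx := ⟨by
          rw [hμxdef, Ne, Measure.restrict_eq_zero, Real.volume_Ioc, sub_zero,
            ENNReal.ofReal_eq_zero]
          exact not_le.2 hx⟩
        have hmemIoc : ∀ᵐ t ∂μx, t ∈ Ioc (0:ℝ) x := ae_restrict_mem measurableSet_Ioc
        have hg₁g : ∀ᵐ t ∂μx, g₁ t = t * (φ (f t) / φ t) := by
          refine ae_restrict_of_ae_restrict_of_subset Ioc_subset_Ioi_self ?_
          filter_upwards [hh₁, ae_restrict_mem measurableSet_Ioi] with t hteq htm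
          have hpow : t ^ (p - 1) * t ^ (2 - p) = t := by
            rw [← Real.rpow_add htm]; norm_num
          rw [hg₁def]
          simp only [← hteq]
          calc t ^ (p - 1) * (t ^ (2 - p) * (φ (f t) / φ t))
              = (t ^ (p - 1) * t ^ (2 - p)) * (φ (f t) / φ t) := by ring
            _ = t * (φ (f t) / φ t) := by rw [hpow]
        -- slope inequality from convexity
        have hslope : ∀ t ∈ Ioc (0:ℝ) x, φ t * x ≤ t * φ x := by
          intro t ht
          have h2 : φ t ≤ t / x * φ x := by
            have hb0 : 0 ≤ t / x := le_of_lt (div_pos ht.1 hx)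
            have hb1 : t / x ≤ 1 := (div_le_one hx).2 ht.2
            have h1 := hφ_conv.2 (self_mem_Ici) (mem_Ici.2 hx.le)
              (by linarith : (0:ℝ) ≤ 1 - t / x) hb0 (by ring)
            have harg : (1 - t / x) • (0:ℝ) + (t / x) • x = t := by
              simp only [smul_eq_mul]
              field_simp
              ring
            rw [harg] at h1
            simpa [hφ0] using h1
          calc φ t * x ≤ (t / x * φ x) * x := mul_le_mul_of_nonneg_right h2 hx.le
            _ = t * φ x := by field_simp
        -- integrability of φ ∘ f
        set ψ : ℝ → ℝ := fun t => φ t / t * g₁ t with hψdef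
        have hψmeas : AEMeasurable ψ μx := by
          have hc : ContinuousOn (fun t : ℝ => φ t / t) (Ioc 0 x) :=
            ContinuousOn.div (hcont.mono (fun t ht => le_of_lt ht.1))
              continuousOn_id (fun t ht => ne_of_gt ht.1)
          exact (hc.aemeasurable measurableSet_Ioc).mul g₁meas.aemeasurable
        have hbound_int : Integrable (fun t => φ x / x * g₁ t) μx :=
          (hg₁int x hx).const_mul _
        have hψle' : ∀ᵐ t ∂μx, ψ t ≤ φ x / x * g₁ t := by
          filter_upwards [hmemIoc] with t ht
          have hdiv : φ t / t ≤ φ x / x := by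
            rw [div_le_div_iff₀ ht.1 hx]
            linarith [hslope t ht]
          exact mul_le_mul_of_nonneg_right hdiv (g₁nonneg t ht.1)
        have hψnn : ∀ᵐ t ∂μx, 0 ≤ ψ t := by
          filter_upwards [hmemIoc] with t ht
          exact mul_nonneg (div_nonneg (hφ_nonneg t ht.1.le) ht.1.le) (g₁nonneg t ht.1)
        have hψint : Integrable ψ μx := by
          refine Integrable.mono' hbound_int hψmeas.aestronglyMeasurable ?_
          filter_upwards [hψle', hψnn] with t h1 h2
          rw [Real.norm_of_nonneg h2]; exact h1
        have hφf_eq : (fun t => φ (f t)) =ᵐ[μx] ψ := by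
          filter_upwards [hg₁g, hmemIoc] with t he ht
          have ht0 : t ≠ 0 := ne_of_gt ht.1
          have hφt : φ t ≠ 0 := ne_of_gt (hφpos t ht.1)
          rw [hψdef]
          simp only [he]
          field_simp
        have hφfint : Integrable (fun t => φ (f t)) μx := hψint.congr hφf_eq.symm
        have hfs : ∀ᵐ t ∂μx, f t ∈ Ici (0:ℝ) := by
          filter_upwards [hmemIoc] with t ht using hf_nonneg t ht.1
        have jensen : φ (⨍ t, f t ∂μx) ≤ ⨍ t, φ (f t) ∂μx :=
          hφ_conv.map_average_le hcont isClosed_Ici hfs hfi hφfint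
        have havg : ⨍ t, f t ∂μx = F x / x := by
          rw [average_eq, smul_eq_mul, measureReal_def, hμuniv, hF x,
            intervalIntegral.integral_of_le hx.le, div_eq_inv_mul]
        have havgφ : ⨍ t, φ (f t) ∂μx = x⁻¹ * ∫ t in Ioc (0:ℝ) x, φ (f t) := by
          rw [average_eq, smul_eq_mul, measureReal_def, hμuniv]
        have hstep3 : ∫ t in Ioc (0:ℝ) x, φ (f t) ≤ φ x / x * M x := by
          calc ∫ t in Ioc (0:ℝ) x, φ (f t) = ∫ t in Ioc (0:ℝ) x, ψ t :=
              integral_congr_ae hφf_eq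
            _ ≤ ∫ t in Ioc (0:ℝ) x, φ x / x * g₁ t :=
              integral_mono_ae hψint hbound_int hψle'
            _ = φ x / x * M x := by rw [MeasureTheory.integral_const_mul]
        have hjen : φ (F x / x) ≤ x⁻¹ * (φ x / x * M x) := by
          calc φ (F x / x) = φ (⨍ t, f t ∂μx) := by rw [havg]
            _ ≤ ⨍ t, φ (f t) ∂μx := jensen
            _ = x⁻¹ * ∫ t in Ioc (0:ℝ) x, φ (f t) := havgφ
            _ ≤ x⁻¹ * (φ x / x * M x) :=
              mul_le_mul_of_nonneg_left hstep3 (inv_nonneg.2 hx.le)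
        have hkey : φ (x ^ q * F x) ≤ φ x ^ (q + 1) * φ (F x / x) := by
          have hxq : x ^ q * F x = x ^ (q + 1) * (F x / x) := by
            field_simp; ring
          rw [hxq]
          exact phi_pow_mul φ hφ_nonneg hφ_sub (q + 1) x hx (F x / x) (div_pos hFpos hx)
        have hnum : φ (x ^ q * F x) ≤ φ x ^ (q + 1) * (x⁻¹ * (φ x / x * M x)) :=
          le_trans hkey (mul_le_mul_of_nonneg_left hjen (pow_nonneg hφx.le _))
        calc x ^ (2 - p) * (φ (x ^ q * F x) / φ x ^ (q + 2))
            ≤ x ^ (2 - p) * ((φ x ^ (q + 1) * (x⁻¹ * (φ x / x * M x))) / φ x ^ (q + 2)) := by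
              gcongr
          _ = x ^ (2 - p) * (M x / (x * x)) := by
              congr 1
              have hφne : φ x ≠ 0 := ne_of_gt hφx
              have hxne : x ≠ 0 := ne_of_gt hx
              field_simp
              ring
          _ = B x := by
              have hxne : x ≠ 0 := ne_of_gt hx
              have hxx : x * x = x ^ (2:ℝ) := by
                rw [show (2:ℝ) = ((2:ℕ):ℝ) by norm_num, Real.rpow_natCast, sq]
              have h2p : x ^ (2 - p) = x ^ (-p) * (x * x) := by
                rw [hxx, ← Real.rpow_add hx]
                congr 1
                ring
              show x ^ (2 - p) * (M x / (x * x)) = x ^ (-p) * M x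
              rw [h2p]
              field_simp
        -- end calc
    have hLnn : ∀ x ∈ Ioi (0:ℝ), 0 ≤ x ^ (2 - p) * (φ (x ^ q * F x) / φ x ^ (q + 2)) := by
      intro x hx
      have hx : (0:ℝ) < x := hx
      exact mul_nonneg (Real.rpow_nonneg hx.le _)
        (div_nonneg (hφ_nonneg _ (mul_nonneg (pow_nonneg hx.le _) (hFnn x hx)))
          (pow_nonneg (hφ_nonneg x hx.le) _))
    calc ∫ x in Ioi (0:ℝ), x ^ (2 - p) * (φ (x ^ q * F x) / φ x ^ (q + 2))
        ≤ ∫ x in Ioi (0:ℝ), B x :=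
          integral_mono_of_nonneg
            ((ae_restrict_iff' measurableSet_Ioi).2 (ae_of_all _ hLnn)) hBint
            ((ae_restrict_iff' measurableSet_Ioi).2 (ae_of_all _ hLB))
      _ = (1 / (p - 1)) * ∫ t in Ioi (0:ℝ), h₁ t := hBval
      _ = (1 / (p - 1)) * ∫ x in Ioi (0:ℝ), x ^ (2 - p) * (φ (f x) / φ x) := by
          rw [integral_congr_ae hh₁]
end

section
/- Let f ≥ 0 and g > 0 both non-decreasing on (0,∞), F(x)=∫₀ˣ f, G(x)=∫₀ˣ g. Let φ ≥ 0 be non-decreasing and 0 < a < b < ∞. If φ(f·g) is integrable on [a,b], then ∫ₐᵇ φ(F(x)G(x)/x²) dx ≤ ∫ₐᵇ φ(f(x)g(x)) dx. -/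
open MeasureTheory Set intervalIntegral

lemma key_bound (f : ℝ → ℝ) (hnn : ∀ x ∈ Ioi (0:ℝ), 0 ≤ f x)
    (hmono : MonotoneOn f (Ioi 0)) {x : ℝ} (hx : 0 < x) :
    0 ≤ (∫ t in (0:ℝ)..x, f t) ∧ (∫ t in (0:ℝ)..x, f t) ≤ x * f x := by
  rw [intervalIntegral.integral_of_le hx.le]
  have hsub : Ioc (0:ℝ) x ⊆ Ioi 0 := Ioc_subset_Ioi_self
  have hmeas : AEMeasurable f (volume.restrict (Ioc (0:ℝ) x)) :=
    aemeasurable_restrict_of_monotoneOn measurableSet_Ioc (hmono.mono hsub)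
  have hconst : IntegrableOn (fun _ : ℝ => f x) (Ioc (0:ℝ) x) := by
    simp [integrableOn_const, measure_Ioc_lt_top]
  have hint : IntegrableOn f (Ioc (0:ℝ) x) := by
    refine Integrable.mono' hconst hmeas.aestronglyMeasurable ?_
    refine (ae_restrict_iff' measurableSet_Ioc).mpr (ae_of_all _ fun t ht => ?_)
    rw [Real.norm_eq_abs, abs_of_nonneg (hnn t ht.1)]
    exact hmono ht.1 (Set.mem_Ioi.mpr hx) ht.2
  constructor
  · exact setIntegral_nonneg measurableSet_Ioc fun t ht => hnn t ht.1
  · have h1 : (∫ t in Ioc (0:ℝ) x, f t) ≤ ∫ _t in Ioc (0:ℝ) x, f x :=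
      setIntegral_mono_on hint hconst measurableSet_Ioc
        (fun t ht => hmono ht.1 (Set.mem_Ioi.mpr hx) ht.2)
    calc (∫ t in Ioc (0:ℝ) x, f t) ≤ ∫ _t in Ioc (0:ℝ) x, f x := h1
      _ = x * f x := by
          rw [setIntegral_const, measureReal_def, Real.volume_Ioc, smul_eq_mul, sub_zero,
            ENNReal.toReal_ofReal hx.le]

theorem chebyshev_hardy (f g F G φ : ℝ → ℝ) (a b : ℝ) (ha : 0 < a) (hab : a < b)
    (hf_nonneg : ∀ x ∈ Ioi (0:ℝ), 0 ≤ f x)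
    (hf_mono : MonotoneOn f (Ioi 0))
    (hg_pos : ∀ x ∈ Ioi (0:ℝ), 0 < g x)
    (hg_mono : MonotoneOn g (Ioi 0))
    (hφ_nonneg : ∀ x, 0 ≤ φ x) (hφ_mono : Monotone φ)
    (hF : ∀ x, F x = ∫ t in (0:ℝ)..x, f t)
    (hG : ∀ x, G x = ∫ t in (0:ℝ)..x, g t)
    (hint : IntegrableOn (fun x => φ (f x * g x)) (Icc a b)) :
    ∫ x in a..b, φ (F x * G x / x ^ 2) ≤ ∫ x in a..b, φ (f x * g x) := by
  have hint' : IntervalIntegrable (fun x => φ (f x * g x)) volume a b := by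
    apply IntegrableOn.intervalIntegrable
    rwa [uIcc_of_le hab.le]
  have hpt : ∀ x ∈ Icc a b, φ (F x * G x / x ^ 2) ≤ φ (f x * g x) := by
    intro x hx
    have hx0 : 0 < x := lt_of_lt_of_le ha hx.1
    obtain ⟨hFnn, hFle⟩ := key_bound f hf_nonneg hf_mono hx0
    obtain ⟨hGnn, hGle⟩ := key_bound g (fun t ht => (hg_pos t ht).le) hg_mono hx0
    rw [← hF x] at hFnn hFle
    rw [← hG x] at hGnn hGle
    apply hφ_mono
    rw [div_le_iff₀ (by positivity)]
    have hfx : 0 ≤ f x := hf_nonneg x hx0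
    calc F x * G x ≤ (x * f x) * (x * g x) :=
          mul_le_mul hFle hGle hGnn (by positivity)
      _ = f x * g x * x ^ 2 := by ring
  by_cases h : IntervalIntegrable (fun x => φ (F x * G x / x ^ 2)) volume a b
  · exact intervalIntegral.integral_mono_on hab.le h hint' hpt
  · rw [intervalIntegral.integral_undef h]
    exact intervalIntegral.integral_nonneg hab.le fun u _ => hφ_nonneg _
end

section
/- Let f ≥ 0 be non-decreasing on (0,∞), F(x)=∫₀ˣ f, p ≥ 1, 0 < a < b < ∞. Then ∫ₐᵇ (F(x)/x)^p dx ≤ ∫ₐᵇ f(x)^p dx. -/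
open MeasureTheory Set intervalIntegral

theorem hardy_interval (f F : ℝ → ℝ) (p a b : ℝ) (hp : 1 ≤ p) (ha : 0 < a) (hab : a < b)
    (hf_nonneg : ∀ x ∈ Ioi (0:ℝ), 0 ≤ f x)
    (hf_mono : MonotoneOn f (Ioi 0))
    (hF : ∀ x, F x = ∫ t in (0:ℝ)..x, f t) :
    ∫ x in a..b, (F x / x) ^ p ≤ ∫ x in a..b, f x ^ p := by
  have hb : (0:ℝ) < b := ha.trans hab
  have hp0 : (0:ℝ) ≤ p := le_trans zero_le_one hp
  -- f is integrable on Ioc 0 b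
  have hmeas : AEMeasurable f (volume.restrict (Ioc (0:ℝ) b)) :=
    aemeasurable_restrict_of_monotoneOn measurableSet_Ioc
      (hf_mono.mono (fun x hx => hx.1))
  have hIf : IntegrableOn f (Ioc (0:ℝ) b) := by
    refine Integrable.mono' (g := fun _ => f b)
      (integrableOn_const (by simp [hb]))
      hmeas.aestronglyMeasurable ?_
    · exact Filter.Eventually.mono
        (self_mem_ae_restrict measurableSet_Ioc)
        (fun t ht => by
          rw [Real.norm_eq_abs, abs_of_nonneg (hf_nonneg t ht.1)]
          exact hf_mono ht.1 hb ht.2)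
  have hIfIcc : IntegrableOn f (Icc (0:ℝ) b) :=
    (integrableOn_Icc_iff_integrableOn_Ioc (by simp)).2 hIf
  -- F is continuous on Icc 0 b
  have hFcont : ContinuousOn F (Icc 0 b) := by
    have := intervalIntegral.continuousOn_primitive_interval
      (f := f) (μ := volume) (a := (0:ℝ)) (b := b)
      (by rwa [uIcc_of_le hb.le])
    rw [uIcc_of_le hb.le] at this
    exact this.congr (fun x _ => hF x)
  -- key pointwise bound: for x ∈ Icc a b, F x / x ≤ f x and 0 ≤ F x / x
  have key : ∀ x ∈ Icc a b, 0 ≤ F x / x ∧ F x / x ≤ f x := by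
    intro x hx
    have hxpos : 0 < x := lt_of_lt_of_le ha hx.1
    have hsub : Ioc (0:ℝ) x ⊆ Ioc 0 b := Ioc_subset_Ioc le_rfl hx.2
    have hIfx : IntegrableOn f (Ioc (0:ℝ) x) := hIf.mono_set hsub
    have hFx : F x = ∫ t in Ioc (0:ℝ) x, f t := by
      rw [hF x, intervalIntegral.integral_of_le hxpos.le]
    have hF0 : 0 ≤ F x := by
      rw [hFx]
      exact setIntegral_nonneg measurableSet_Ioc (fun t ht => hf_nonneg t ht.1)
    have hFle : F x ≤ x * f x := by
      rw [hFx]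
      calc ∫ t in Ioc (0:ℝ) x, f t ≤ ∫ _t in Ioc (0:ℝ) x, f x := by
            refine setIntegral_mono_on hIfx (integrableOn_const (by simp [hxpos]))
              measurableSet_Ioc (fun t ht => hf_mono ht.1 hxpos ht.2)
        _ = x * f x := by
            simp [Real.volume_Ioc, hxpos.le]
    exact ⟨div_nonneg hF0 hxpos.le, (div_le_iff₀ hxpos).2 (by linarith)⟩
  -- integrability of both sides on [a,b]
  have huIcc : uIcc a b = Icc a b := uIcc_of_le hab.le
  have hsubIoi : Icc a b ⊆ Ioi (0:ℝ) := fun x hx => lt_of_lt_of_le ha hx.1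
  have hInt1 : IntervalIntegrable (fun x => (F x / x) ^ p) volume a b := by
    apply ContinuousOn.intervalIntegrable
    rw [huIcc]
    apply ContinuousOn.rpow_const
    · exact ((hFcont.mono (Icc_subset_Icc ha.le le_rfl)).div continuousOn_id
        (fun x hx => ne_of_gt (lt_of_lt_of_le ha hx.1)))
    · intro x hx
      exact Or.inr hp0
  have hInt2 : IntervalIntegrable (fun x => f x ^ p) volume a b := by
    apply MonotoneOn.intervalIntegrable
    rw [huIcc]
    intro x hx y hy hxy
    exact Real.rpow_le_rpow (hf_nonneg x (hsubIoi hx))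
      (hf_mono (hsubIoi hx) (hsubIoi hy) hxy) hp0
  refine intervalIntegral.integral_mono_on hab.le hInt1 hInt2 (fun x hx => ?_)
  obtain ⟨h1, h2⟩ := key x hx
  exact Real.rpow_le_rpow h1 h2 hp0
end

section
/- Let f ≥ 0 and g > 0 both non-decreasing on (0,∞), F(x)=∫₀ˣ f, G(x)=∫₀ˣ g. Let φ ≥ 0 be non-increasing and 0 < a < b < ∞. Then ∫ₐᵇ φ(F(x)G(x)/x²) dx ≥ ∫ₐᵇ φ(f(x)g(x)) dx. -/
open MeasureTheory Set intervalIntegral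

theorem chebyshev_hardy_reverse (f g F G φ : ℝ → ℝ) (a b : ℝ) (ha : 0 < a) (hab : a < b)
    (hf_nonneg : ∀ x ∈ Ioi (0:ℝ), 0 ≤ f x)
    (hf_mono : MonotoneOn f (Ioi 0))
    (hg_pos : ∀ x ∈ Ioi (0:ℝ), 0 < g x)
    (hg_mono : MonotoneOn g (Ioi 0))
    (hφ_nonneg : ∀ x, 0 ≤ φ x) (hφ_anti : Antitone φ)
    (hF : ∀ x, F x = ∫ t in (0:ℝ)..x, f t)
    (hG : ∀ x, G x = ∫ t in (0:ℝ)..x, g t) :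
    ∫ x in a..b, φ (F x * G x / x ^ 2) ≥ ∫ x in a..b, φ (f x * g x) := by
  have hae0 : ∀ᵐ t : ℝ, t ≠ (0:ℝ) :=
    (compl_mem_ae_iff (s := ({0} : Set ℝ))).2 (by simpa using measure_singleton (0:ℝ))
  -- integrability of f and g on [0, x]
  have hf_int : ∀ x ∈ Ioi (0:ℝ), IntervalIntegrable f volume 0 x := by
    intro x hx
    rw [intervalIntegrable_iff_integrableOn_Ioc_of_le (le_of_lt hx)]
    have hmeas : AEMeasurable f (volume.restrict (Ioc 0 x)) :=
      aemeasurable_restrict_of_monotoneOn measurableSet_Ioc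
        (hf_mono.mono Ioc_subset_Ioi_self)
    refine Integrable.mono' (integrable_const (f x)) hmeas.aestronglyMeasurable ?_
    rw [ae_restrict_iff' measurableSet_Ioc]
    refine ae_of_all _ fun t ht => ?_
    rw [Real.norm_eq_abs, abs_of_nonneg (hf_nonneg t ht.1)]
    exact hf_mono ht.1 hx ht.2
  have hg_int : ∀ x ∈ Ioi (0:ℝ), IntervalIntegrable g volume 0 x := by
    intro x hx
    rw [intervalIntegrable_iff_integrableOn_Ioc_of_le (le_of_lt hx)]
    have hmeas : AEMeasurable g (volume.restrict (Ioc 0 x)) :=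
      aemeasurable_restrict_of_monotoneOn measurableSet_Ioc
        (hg_mono.mono Ioc_subset_Ioi_self)
    refine Integrable.mono' (integrable_const (g x)) hmeas.aestronglyMeasurable ?_
    rw [ae_restrict_iff' measurableSet_Ioc]
    refine ae_of_all _ fun t ht => ?_
    rw [Real.norm_eq_abs, abs_of_nonneg (hg_pos t ht.1).le]
    exact hg_mono ht.1 hx ht.2
  -- F and G are nonnegative on (0, ∞)
  have hF_nonneg : ∀ x ∈ Ioi (0:ℝ), 0 ≤ F x := by
    intro x hx
    rw [hF x]
    refine integral_nonneg_of_ae_restrict (le_of_lt hx) ?_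
    apply (ae_restrict_iff' measurableSet_Icc).mpr
    filter_upwards [hae0] with t ht htmem
    exact hf_nonneg t (lt_of_le_of_ne htmem.1 (Ne.symm ht))
  have hG_nonneg : ∀ x ∈ Ioi (0:ℝ), 0 ≤ G x := by
    intro x hx
    rw [hG x]
    refine integral_nonneg_of_ae_restrict (le_of_lt hx) ?_
    apply (ae_restrict_iff' measurableSet_Icc).mpr
    filter_upwards [hae0] with t ht htmem
    exact (hg_pos t (lt_of_le_of_ne htmem.1 (Ne.symm ht))).le
  -- F x ≤ x * f x and G x ≤ x * g x
  have hF_le : ∀ x ∈ Ioi (0:ℝ), F x ≤ x * f x := by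
    intro x hx
    rw [hF x]
    have h := integral_mono_ae_restrict (μ := volume) (a := 0) (b := x)
      (f := f) (g := fun _ => f x) (le_of_lt hx) (hf_int x hx) intervalIntegrable_const ?_
    · simpa using h
    · apply (ae_restrict_iff' measurableSet_Icc).mpr
      filter_upwards [hae0] with t ht htmem
      exact hf_mono (lt_of_le_of_ne htmem.1 (Ne.symm ht)) hx htmem.2
  have hG_le : ∀ x ∈ Ioi (0:ℝ), G x ≤ x * g x := by
    intro x hx
    rw [hG x]
    have h := integral_mono_ae_restrict (μ := volume) (a := 0) (b := x)
      (f := g) (g := fun _ => g x) (le_of_lt hx) (hg_int x hx) intervalIntegrable_const ?_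
    · simpa using h
    · apply (ae_restrict_iff' measurableSet_Icc).mpr
      filter_upwards [hae0] with t ht htmem
      exact hg_mono (lt_of_le_of_ne htmem.1 (Ne.symm ht)) hx htmem.2
  -- pointwise inequality on Icc a b
  have key : ∀ x ∈ Icc a b, φ (f x * g x) ≤ φ (F x * G x / x ^ 2) := by
    intro x hx
    have hx0 : (0:ℝ) < x := lt_of_lt_of_le ha hx.1
    have hxIoi : x ∈ Ioi (0:ℝ) := hx0
    apply hφ_anti
    rw [div_le_iff₀ (by positivity : (0:ℝ) < x ^ 2)]
    calc F x * G x ≤ (x * f x) * (x * g x) :=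
          mul_le_mul (hF_le x hxIoi) (hG_le x hxIoi) (hG_nonneg x hxIoi)
            (mul_nonneg hx0.le (hf_nonneg x hxIoi))
      _ = f x * g x * x ^ 2 := by ring
  -- monotonicity of F, G on positive reals
  have hF_mono : MonotoneOn F (Ioi (0:ℝ)) := by
    intro x hx y hy hxy
    have hxy_int : IntervalIntegrable f volume x y := (hf_int x hx).symm.trans (hf_int y hy)
    have hadd : (∫ t in (0:ℝ)..x, f t) + ∫ t in x..y, f t = ∫ t in (0:ℝ)..y, f t :=
      integral_add_adjacent_intervals (hf_int x hx) hxy_int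
    have hnn : 0 ≤ ∫ t in x..y, f t := by
      refine integral_nonneg_of_ae_restrict hxy ?_
      apply (ae_restrict_iff' measurableSet_Icc).mpr
      refine ae_of_all _ fun t htmem => hf_nonneg t (lt_of_lt_of_le hx htmem.1)
    rw [hF x, hF y, ← hadd]
    linarith
  have hG_mono : MonotoneOn G (Ioi (0:ℝ)) := by
    intro x hx y hy hxy
    have hxy_int : IntervalIntegrable g volume x y := (hg_int x hx).symm.trans (hg_int y hy)
    have hadd : (∫ t in (0:ℝ)..x, g t) + ∫ t in x..y, g t = ∫ t in (0:ℝ)..y, g t :=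
      integral_add_adjacent_intervals (hg_int x hx) hxy_int
    have hnn : 0 ≤ ∫ t in x..y, g t := by
      refine integral_nonneg_of_ae_restrict hxy ?_
      apply (ae_restrict_iff' measurableSet_Icc).mpr
      refine ae_of_all _ fun t htmem => (hg_pos t (lt_of_lt_of_le hx htmem.1)).le
    rw [hG x, hG y, ← hadd]
    linarith
  have hIccsub : Icc a b ⊆ Ioi (0:ℝ) := fun x hx => lt_of_lt_of_le ha hx.1
  have hIocsub : Ioc a b ⊆ Ioi (0:ℝ) := fun x hx => lt_trans ha hx.1
  -- integrability of RHS integrand: antitone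
  have hRHS_int : IntervalIntegrable (fun x => φ (f x * g x)) volume a b := by
    apply AntitoneOn.intervalIntegrable
    rw [uIcc_of_le hab.le]
    intro x hx y hy hxy
    apply hφ_anti
    exact mul_le_mul (hf_mono (hIccsub hx) (hIccsub hy) hxy)
      (hg_mono (hIccsub hx) (hIccsub hy) hxy) (hg_pos x (hIccsub hx)).le
      (hf_nonneg y (hIccsub hy))
  -- integrability of LHS integrand: measurable and bounded
  have hLHS_int : IntervalIntegrable (fun x => φ (F x * G x / x ^ 2)) volume a b := by
    rw [intervalIntegrable_iff_integrableOn_Ioc_of_le hab.le]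
    have hFm : AEMeasurable F (volume.restrict (Ioc a b)) :=
      aemeasurable_restrict_of_monotoneOn measurableSet_Ioc (hF_mono.mono hIocsub)
    have hGm : AEMeasurable G (volume.restrict (Ioc a b)) :=
      aemeasurable_restrict_of_monotoneOn measurableSet_Ioc (hG_mono.mono hIocsub)
    have hinner : AEMeasurable (fun x => F x * G x / x ^ 2) (volume.restrict (Ioc a b)) :=
      (hFm.mul hGm).div ((measurable_id.pow_const 2).aemeasurable)
    have hcomp : AEMeasurable (fun x => φ (F x * G x / x ^ 2)) (volume.restrict (Ioc a b)) :=
      hφ_anti.measurable.comp_aemeasurable hinner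
    refine Integrable.mono' (integrable_const (φ 0)) hcomp.aestronglyMeasurable ?_
    rw [ae_restrict_iff' measurableSet_Ioc]
    refine ae_of_all _ fun x hx => ?_
    have hx0 : x ∈ Ioi (0:ℝ) := hIocsub hx
    rw [Real.norm_eq_abs, abs_of_nonneg (hφ_nonneg _)]
    apply hφ_anti
    exact div_nonneg (mul_nonneg (hF_nonneg x hx0) (hG_nonneg x hx0)) (sq_nonneg x)
  exact integral_mono_on hab.le hRHS_int hLHS_int key
end
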